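/- arXiv:math/0011090 — 3 statements merged into one kernel-verified Lean document; each statement's English description precedes it below -/
import Mathlib

section
/- Let a Morse–Sturm system on [a,b] with initial data (P,S) and a maximal negative distribution D with smooth frame Y_1,…,Y_k be given. Let v ∈ 𝔖 and write v = Σ_{i=1}^k f_i Y_i with f = (f_1,…,f_k). Then v ∈ 𝒦 if and only if f is a solution of the reduced symplectic system, i.e., there exists a C^1 map φ : [a,b] → ℝ^{k*} such that f' = −𝓑^{-1}𝓒 f − 𝓑^{-1}φ and φ' = (𝓒*𝓑^{-1}𝓒 − 𝓘) f + 𝓒*𝓑^{-1}φ. -/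
open MeasureTheory Set Filter Matrix
open scoped RealInnerProductSpace Topology

noncomputable section

/-- `ℝ^n` with its Euclidean structure. -/
abbrev Rn (n : ℕ) := EuclideanSpace ℝ (Fin n)

/-- `B` is negative definite on the subspace `W`. -/
def negDefOn {M : Type*} [AddCommGroup M] [Module ℝ M]
    (B : M → M → ℝ) (W : Submodule ℝ M) : Prop :=
  ∀ v ∈ W, v ≠ 0 → B v v < 0

/-- The index `n₋` of (the restriction to the subspace described by the set `S` of)
the symmetric bilinear form `B` is the finite number `m`: there is a subspace of `S` of
dimension `m` on which `B` is negative definite, and every subspace of `S` on which `B`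
is negative definite has dimension at most `m`. -/
def hasNegIdxOn {M : Type*} [AddCommGroup M] [Module ℝ M]
    (B : M → M → ℝ) (S : Set M) (m : ℕ) : Prop :=
  (∃ W : Submodule ℝ M, (W : Set M) ⊆ S ∧ negDefOn B W ∧ Module.rank ℝ W = m) ∧
  (∀ W : Submodule ℝ M, (W : Set M) ⊆ S → negDefOn B W → Module.rank ℝ W ≤ m)

/-- The coindex `n₊ = n₋(-B)`. -/
def hasPosIdxOn {M : Type*} [AddCommGroup M] [Module ℝ M]
    (B : M → M → ℝ) (S : Set M) (m : ℕ) : Prop :=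
  hasNegIdxOn (fun x y => - B x y) S m

/-- The set `S` (which is in fact a linear subspace) has dimension `m`. -/
def hasDim {M : Type*} [AddCommGroup M] [Module ℝ M] (S : Set M) (m : ℕ) : Prop :=
  (∃ W : Submodule ℝ M, (W : Set M) ⊆ S ∧ Module.rank ℝ W = m) ∧
  (∀ W : Submodule ℝ M, (W : Set M) ⊆ S → Module.rank ℝ W ≤ m)

/-- The canonical a.e. derivative of a function on `[a,b]` (vanishing outside `[a,b]`,
junk values where `v` is not differentiable). -/
def der (a b : ℝ) {E : Type*} [NormedAddCommGroup E] [NormedSpace ℝ E]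
    (v : ℝ → E) : ℝ → E :=
  (Set.Icc a b).indicator (fun t => derivWithin v (Set.Icc a b) t)

/-- `v` belongs to the Sobolev space `H¹([a,b];E)`: it is absolutely continuous on `[a,b]`
with square-integrable derivative.  As normalization, functions are extended constantly
outside of `[a,b]`. -/
def IsH1 (a b : ℝ) {E : Type*} [NormedAddCommGroup E] [NormedSpace ℝ E]
    (v : ℝ → E) : Prop :=
  MemLp (der a b v) 2 (volume.restrict (Set.Icc a b)) ∧
  (∀ t ∈ Set.Icc a b, v t = v a + ∫ s in a..t, der a b v s) ∧
  (∀ t, t ≤ a → v t = v a) ∧ (∀ t, b ≤ t → v t = v b)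

/-- `H¹₀([a,b];E)`. -/
def H10 (a b : ℝ) (E : Type*) [NormedAddCommGroup E] [NormedSpace ℝ E] : Set (ℝ → E) :=
  {v | IsH1 a b v ∧ v a = 0 ∧ v b = 0}

/-- The space `ℋ = {v ∈ H¹ : v(a) ∈ P, v(b) = 0}`. -/
def Hcal (a b : ℝ) {n : ℕ} (P : Submodule ℝ (Rn n)) : Set (ℝ → Rn n) :=
  {v | IsH1 a b v ∧ v a ∈ P ∧ v b = 0}

/-- The space `ℋ^# = {v ∈ H¹ : v(a) ∈ P}`. -/
def Hsharp (a b : ℝ) {n : ℕ} (P : Submodule ℝ (Rn n)) : Set (ℝ → Rn n) :=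
  {v | IsH1 a b v ∧ v a ∈ P}

/-- The index form `I(v,w) = ∫ₐᵇ [g(v',w') + g(Rv,w)] dt − S(v(a),w(a))`. -/
def Iform (a b : ℝ) {n : ℕ} (g : Rn n →ₗ[ℝ] Rn n →ₗ[ℝ] ℝ)
    (R : ℝ → Rn n →L[ℝ] Rn n) (S : Rn n →ₗ[ℝ] Rn n →ₗ[ℝ] ℝ)
    (v w : ℝ → Rn n) : ℝ :=
  (∫ t in a..b, (g (der a b v t) (der a b w t) + g (R t (v t)) (w t))) - S (v a) (w a)

/-- The distribution spanned by the frame `Y` at the instant `t`. -/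
def Dt {n k : ℕ} (Y : Fin k → ℝ → Rn n) (t : ℝ) : Submodule ℝ (Rn n) :=
  Submodule.span ℝ (Set.range fun i => Y i t)

/-- The space `𝒦` of fields which are "Jacobi in the directions of the distribution". -/
def Kcal (a b : ℝ) {n k : ℕ} (g : Rn n →ₗ[ℝ] Rn n →ₗ[ℝ] ℝ)
    (R : ℝ → Rn n →L[ℝ] Rn n) (P : Submodule ℝ (Rn n))
    (Y : Fin k → ℝ → Rn n) : Set (ℝ → Rn n) :=
  {v | v ∈ Hcal a b P ∧ ∀ i : Fin k, ∃ w : ℝ → ℝ, IsH1 a b w ∧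
    (∀ᵐ t ∂(volume.restrict (Set.Icc a b)), w t = g (der a b v t) (Y i t)) ∧
    (∀ᵐ t ∂(volume.restrict (Set.Icc a b)),
      der a b w t = g (der a b v t) (deriv (Y i) t) + g (R t (v t)) (Y i t))}

/-- The sharped version `𝒦^#`. -/
def Ksharp (a b : ℝ) {n k : ℕ} (g : Rn n →ₗ[ℝ] Rn n →ₗ[ℝ] ℝ)
    (R : ℝ → Rn n →L[ℝ] Rn n) (P : Submodule ℝ (Rn n))
    (Y : Fin k → ℝ → Rn n) : Set (ℝ → Rn n) :=
  {v | v ∈ Hsharp a b P ∧ ∀ i : Fin k, ∃ w : ℝ → ℝ, IsH1 a b w ∧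
    (∀ᵐ t ∂(volume.restrict (Set.Icc a b)), w t = g (der a b v t) (Y i t)) ∧
    (∀ᵐ t ∂(volume.restrict (Set.Icc a b)),
      der a b w t = g (der a b v t) (deriv (Y i) t) + g (R t (v t)) (Y i t))}

/-- The space `𝔖` of `H¹` fields vanishing at the endpoints and taking values in the
distribution spanned by `Y`. -/
def Scal (a b : ℝ) {n k : ℕ} (Y : Fin k → ℝ → Rn n) : Set (ℝ → Rn n) :=
  {v | IsH1 a b v ∧ v a = 0 ∧ v b = 0 ∧ ∀ t ∈ Set.Icc a b, v t ∈ Dt Y t}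

/-- The sharped version `𝔖^#` (no condition at `b`). -/
def Ssharp (a b : ℝ) {n k : ℕ} (Y : Fin k → ℝ → Rn n) : Set (ℝ → Rn n) :=
  {v | IsH1 a b v ∧ v a = 0 ∧ ∀ t ∈ Set.Icc a b, v t ∈ Dt Y t}

/-- `(J, J₁)` is a solution of the Morse--Sturm system `J'' = R J` on `[a,b]`. -/
def IsMSsol (a b : ℝ) {n : ℕ} (R : ℝ → Rn n →L[ℝ] Rn n) (J J₁ : ℝ → Rn n) : Prop :=
  ∀ t ∈ Set.Icc a b, HasDerivWithinAt J (J₁ t) (Set.Icc a b) t ∧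
    HasDerivWithinAt J₁ (R t (J t)) (Set.Icc a b) t

/-- `(J, J₁)` is a `P`-solution: it solves the Morse--Sturm system with the
initial conditions `J(a) ∈ P`, `g(J'(a), ·) + S(J(a), ·) = 0` on `P`. -/
def IsPsol (a b : ℝ) {n : ℕ} (g : Rn n →ₗ[ℝ] Rn n →ₗ[ℝ] ℝ)
    (R : ℝ → Rn n →L[ℝ] Rn n) (P : Submodule ℝ (Rn n))
    (S : Rn n →ₗ[ℝ] Rn n →ₗ[ℝ] ℝ) (J J₁ : ℝ → Rn n) : Prop :=
  IsMSsol a b R J J₁ ∧ J a ∈ P ∧ ∀ w ∈ P, g (J₁ a) w + S (J a) w = 0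

/-- `𝕁[t]`. -/
def Jev (a b : ℝ) {n : ℕ} (g : Rn n →ₗ[ℝ] Rn n →ₗ[ℝ] ℝ)
    (R : ℝ → Rn n →L[ℝ] Rn n) (P : Submodule ℝ (Rn n))
    (S : Rn n →ₗ[ℝ] Rn n →ₗ[ℝ] ℝ) (t : ℝ) : Set (Rn n) :=
  {x | ∃ J J₁, IsPsol a b g R P S J J₁ ∧ J t = x}

/-- The `g`-orthogonal complement `𝕁[t]^⊥`. -/
def JevPerp (a b : ℝ) {n : ℕ} (g : Rn n →ₗ[ℝ] Rn n →ₗ[ℝ] ℝ)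
    (R : ℝ → Rn n →L[ℝ] Rn n) (P : Submodule ℝ (Rn n))
    (S : Rn n →ₗ[ℝ] Rn n →ₗ[ℝ] ℝ) (t : ℝ) : Set (Rn n) :=
  {x | ∀ y ∈ Jev a b g R P S t, g x y = 0}

/-- `t` is a focal instant: some nonzero `P`-solution vanishes at `t`. -/
def isFocal (a b : ℝ) {n : ℕ} (g : Rn n →ₗ[ℝ] Rn n →ₗ[ℝ] ℝ)
    (R : ℝ → Rn n →L[ℝ] Rn n) (P : Submodule ℝ (Rn n))
    (S : Rn n →ₗ[ℝ] Rn n →ₗ[ℝ] ℝ) (t : ℝ) : Prop :=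
  t ∈ Set.Ioc a b ∧ ∃ J J₁, IsPsol a b g R P S J J₁ ∧
    (∃ s ∈ Set.Icc a b, J s ≠ 0) ∧ J t = 0

/-- The matrix `𝓑(t)ᵢⱼ = g(Yᵢ(t), Yⱼ(t))`. -/
def calB {n k : ℕ} (g : Rn n →ₗ[ℝ] Rn n →ₗ[ℝ] ℝ) (Y : Fin k → ℝ → Rn n) (t : ℝ) :
    Matrix (Fin k) (Fin k) ℝ := fun i j => g (Y i t) (Y j t)

/-- The matrix `𝓒(t)ᵢⱼ = g(Yⱼ'(t), Yᵢ(t))`. -/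
def calC {n k : ℕ} (g : Rn n →ₗ[ℝ] Rn n →ₗ[ℝ] ℝ) (Y : Fin k → ℝ → Rn n) (t : ℝ) :
    Matrix (Fin k) (Fin k) ℝ := fun i j => g (deriv (Y j) t) (Y i t)

/-- The matrix `𝓘(t)ᵢⱼ = g(Yᵢ'(t), Yⱼ'(t)) + g(R(t)Yᵢ(t), Yⱼ(t))`. -/
def calI {n k : ℕ} (g : Rn n →ₗ[ℝ] Rn n →ₗ[ℝ] ℝ) (R : ℝ → Rn n →L[ℝ] Rn n)
    (Y : Fin k → ℝ → Rn n) (t : ℝ) : Matrix (Fin k) (Fin k) ℝ :=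
  fun i j => g (deriv (Y i) t) (deriv (Y j) t) + g (R t (Y i t)) (Y j t)

/-- `(f, φ)` is a solution of the reduced symplectic system
`f' = −𝓑⁻¹𝓒 f − 𝓑⁻¹ φ`, `φ' = (𝓒*𝓑⁻¹𝓒 − 𝓘) f + 𝓒*𝓑⁻¹ φ` on `[a,b]`. -/
def ReducedSol (a b : ℝ) {n k : ℕ} (g : Rn n →ₗ[ℝ] Rn n →ₗ[ℝ] ℝ)
    (R : ℝ → Rn n →L[ℝ] Rn n) (Y : Fin k → ℝ → Rn n)
    (f φ : ℝ → Fin k → ℝ) : Prop :=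
  ∀ t ∈ Set.Icc a b,
    HasDerivWithinAt f
      (-(((calB g Y t)⁻¹ * calC g Y t) *ᵥ f t) - (calB g Y t)⁻¹ *ᵥ φ t)
      (Set.Icc a b) t ∧
    HasDerivWithinAt φ
      ((((calC g Y t)ᵀ * (calB g Y t)⁻¹ * calC g Y t - calI g R Y t) *ᵥ f t)
        + ((calC g Y t)ᵀ * (calB g Y t)⁻¹) *ᵥ φ t)
      (Set.Icc a b) t

/-- `t` is a focal instant of the reduced symplectic system. -/
def isFocalRed (a b : ℝ) {n k : ℕ} (g : Rn n →ₗ[ℝ] Rn n →ₗ[ℝ] ℝ)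
    (R : ℝ → Rn n →L[ℝ] Rn n) (Y : Fin k → ℝ → Rn n) (t : ℝ) : Prop :=
  t ∈ Set.Ioc a b ∧ ∃ f φ, ReducedSol a b g R Y f φ ∧ f a = 0 ∧ φ a ≠ 0 ∧ f t = 0

/-- The space of solutions of the reduced symplectic system with `f(a) = 0` vanishing at `t`,
identified with the corresponding space of initial values `φ(a)`. -/
def VredSet (a b : ℝ) {n k : ℕ} (g : Rn n →ₗ[ℝ] Rn n →ₗ[ℝ] ℝ)
    (R : ℝ → Rn n →L[ℝ] Rn n) (Y : Fin k → ℝ → Rn n) (t : ℝ) : Set (Fin k → ℝ) :=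
  {x | ∃ f φ, ReducedSol a b g R Y f φ ∧ f a = 0 ∧ φ a = x ∧ f t = 0}



namespace MKRS

variable {E : Type*} [NormedAddCommGroup E] [NormedSpace ℝ E]

lemma hasDerivWithinAt_primitive_Icc [CompleteSpace E] {a b : ℝ} {ψ : ℝ → E}
    (hψ : ContinuousOn ψ (Set.Icc a b)) {t : ℝ} (ht : t ∈ Set.Icc a b) :
    HasDerivWithinAt (fun x => ∫ s in a..x, ψ s) (ψ t) (Set.Icc a b) t := by
  have hmeas : AEStronglyMeasurable ψ (volume.restrict (Set.Icc a b)) :=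
    hψ.aestronglyMeasurable measurableSet_Icc
  have hint : IntervalIntegrable ψ volume a t := by
    apply ContinuousOn.intervalIntegrable (hψ.mono ?_)
    rw [Set.uIcc_of_le ht.1]
    exact Set.Icc_subset_Icc le_rfl ht.2
  have : Fact (t ∈ Set.Icc a b) := ⟨ht⟩
  exact intervalIntegral.integral_hasDerivWithinAt_right hint
    ⟨Set.Icc a b, self_mem_nhdsWithin, hmeas⟩ (hψ t ht)

lemma isH1_integrableOn {a b : ℝ} {u : ℝ → E} (hu : IsH1 a b u) :
    IntegrableOn (der a b u) (Set.Icc a b) volume := by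
  haveI : Fact ((volume : Measure ℝ) (Set.Icc a b) < ⊤) :=
    ⟨measure_Icc_lt_top⟩
  exact hu.1.integrable one_le_two

lemma isH1_intervalIntegrable {a b : ℝ} {u : ℝ → E} (hu : IsH1 a b u) {t : ℝ}
    (ht : t ∈ Set.Icc a b) : IntervalIntegrable (der a b u) volume a t :=
  (intervalIntegrable_iff_integrableOn_Icc_of_le ht.1).2
    ((isH1_integrableOn hu).mono_set (Set.Icc_subset_Icc le_rfl ht.2))

lemma isH1_continuousOn {a b : ℝ} (hab : a ≤ b) {u : ℝ → E} (hu : IsH1 a b u) :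
    ContinuousOn u (Set.Icc a b) := by
  have h1 : IntegrableOn (der a b u) (Set.uIcc a b) volume := by
    rw [Set.uIcc_of_le hab]; exact isH1_integrableOn hu
  have h2 := intervalIntegral.continuousOn_primitive_interval h1
  rw [Set.uIcc_of_le hab] at h2
  exact ((continuousOn_const.add h2).congr fun x hx => hu.2.1 x hx)

/-- If the a.e. derivative of an `H¹` function coincides a.e. with a continuous function `ψ`,
then the function is differentiable within `Icc a b` with derivative `ψ`. -/
lemma isH1_hasDerivWithinAt {a b : ℝ} {u : ℝ → E} [CompleteSpace E] (hu : IsH1 a b u)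
    {ψ : ℝ → E} (hψ : ContinuousOn ψ (Set.Icc a b))
    (hae : der a b u =ᵐ[volume.restrict (Set.Icc a b)] ψ) {t : ℝ} (ht : t ∈ Set.Icc a b) :
    HasDerivWithinAt u (ψ t) (Set.Icc a b) t := by
  have key : ∀ x ∈ Set.Icc a b, u x = u a + ∫ s in a..x, ψ s := by
    intro x hx
    have hi : (∫ s in a..x, der a b u s) = ∫ s in a..x, ψ s := by
      rw [intervalIntegral.integral_of_le hx.1, intervalIntegral.integral_of_le hx.1]
      refine integral_congr_ae ?_
      exact ae_restrict_of_ae_restrict_of_subset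
        (Set.Ioc_subset_Icc_self.trans (Set.Icc_subset_Icc le_rfl hx.2)) hae
    rw [hu.2.1 x hx, hi]
  have H := (hasDerivWithinAt_primitive_Icc hψ ht).const_add (u a)
  exact H.congr (fun y hy => key y hy) (key t ht)

def Gc (g : Rn n →ₗ[ℝ] Rn n →ₗ[ℝ] ℝ) : Rn n →L[ℝ] Rn n →L[ℝ] ℝ :=
  LinearMap.toContinuousLinearMap
    { toFun := fun x => LinearMap.toContinuousLinearMap (g x)
      map_add' := by intro x y; ext z; simp
      map_smul' := by intro c x; ext z; simp }

@[simp] lemma Gc_apply (g : Rn n →ₗ[ℝ] Rn n →ₗ[ℝ] ℝ) (x y : Rn n) : Gc g x y = g x y := rfl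

/-- The key Fubini step. -/
lemma fubini_triangle (G : Rn n →L[ℝ] Rn n →L[ℝ] ℝ) {a t : ℝ} (hat : a ≤ t)
    {h : ℝ → Rn n} (hm : AEStronglyMeasurable h (volume.restrict (Set.Ioc a t)))
    (hi : IntegrableOn h (Set.Ioc a t)) {ζ : ℝ → Rn n} (hζ : Continuous ζ) :
    (∫ s in Set.Ioc a t, ∫ r in Set.Ioc a t, (if s < r then G (h s) (ζ r) else 0))
      = ∫ s in Set.Ioc a t, ∫ r in Set.Ioc a t, (if r ≤ s then G (h r) (ζ s) else 0) := by
  set μ0 := volume.restrict (Set.Ioc a t) with hμ0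
  -- integrability of the full kernel on the product
  have hmF : AEStronglyMeasurable (fun p : ℝ × ℝ => G (h p.1) (ζ p.2)) (μ0.prod μ0) :=
    G.aestronglyMeasurable_comp₂ hm.comp_fst ((hζ.comp continuous_snd).aestronglyMeasurable)
  obtain ⟨Cz, hCz⟩ : ∃ C, ∀ r ∈ Set.Icc a t, ‖ζ r‖ ≤ C :=
    isCompact_Icc.exists_bound_of_continuousOn hζ.continuousOn
  have hR : Integrable (fun p : ℝ × ℝ => (‖G‖ * ‖h p.1‖) * Cz) (μ0.prod μ0) :=
    Integrable.mul_prod (f := fun s => ‖G‖ * ‖h s‖) (g := fun _ => Cz)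
      (hi.norm.const_mul ‖G‖) (integrable_const _)
  have hFint : Integrable (fun p : ℝ × ℝ => G (h p.1) (ζ p.2)) (μ0.prod μ0) := by
    refine hR.mono' hmF ?_
    have h1 : ∀ᵐ p ∂(μ0.prod μ0), p.2 ∈ Set.Ioc a t := by
      refine (Measure.ae_prod_mem_iff_ae_ae_mem
        (measurableSet_Ioc.preimage measurable_snd)).2 ?_
      exact Filter.Eventually.of_forall fun x => ae_restrict_mem measurableSet_Ioc
    filter_upwards [h1] with p hp
    calc ‖G (h p.1) (ζ p.2)‖ ≤ ‖G (h p.1)‖ * ‖ζ p.2‖ := (G (h p.1)).le_opNorm _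
      _ ≤ (‖G‖ * ‖h p.1‖) * Cz := by
          apply mul_le_mul (G.le_opNorm _) (hCz _ (Set.Ioc_subset_Icc_self hp))
            (norm_nonneg _) (by positivity)
  have hSmeas : MeasurableSet {p : ℝ × ℝ | p.1 < p.2} :=
    measurableSet_lt measurable_fst measurable_snd
  have hQint : Integrable (fun p : ℝ × ℝ => if p.1 < p.2 then G (h p.1) (ζ p.2) else 0)
      (μ0.prod μ0) := by
    have := hFint.indicator hSmeas
    refine this.congr (Filter.Eventually.of_forall fun p => ?_)
    simp [Set.indicator_apply, Set.mem_setOf_eq]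
  have swap := MeasureTheory.integral_integral_swap (μ := μ0) (ν := μ0)
      (f := fun s r => if s < r then G (h s) (ζ r) else 0) hQint
  rw [swap]
  -- now both sides are integrals over the outer variable; compare inner integrals
  refine integral_congr_ae ?_
  filter_upwards with s
  refine integral_congr_ae ?_
  have hne : ∀ᵐ r ∂μ0, r ≠ s := by
    rw [hμ0]
    refine ae_restrict_of_ae ?_
    rw [MeasureTheory.ae_iff]
    have h0 : (volume : Measure ℝ) {s} = 0 := measure_singleton s
    simpa using h0
  filter_upwards [hne] with r hr
  have : r < s ↔ r ≤ s := by
    constructor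
    · exact le_of_lt
    · intro hle; exact lt_of_le_of_ne hle hr
  simp only [this]

/-- Integration by parts for a primitive `u` of an integrable function `h`
against a `C¹` function `Z`. -/
lemma ibp_primitive (G : Rn n →L[ℝ] Rn n →L[ℝ] ℝ) {a b : ℝ}
    {h u : ℝ → Rn n}
    (hm : AEStronglyMeasurable h (volume.restrict (Set.Icc a b)))
    (hi : IntegrableOn h (Set.Icc a b))
    (hu : ∀ s ∈ Set.Icc a b, u s = u a + ∫ r in a..s, h r)
    (huC : ContinuousOn u (Set.Icc a b))
    {Z : ℝ → Rn n} (hZc : Continuous Z) (hZ'c : Continuous (deriv Z))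
    (hZd : ∀ s, HasDerivAt Z (deriv Z s) s)
    {t : ℝ} (ht : t ∈ Set.Icc a b) :
    G (u t) (Z t) = G (u a) (Z a)
      + ∫ s in a..t, (G (h s) (Z s) + G (u s) (deriv Z s)) := by
  have hat : a ≤ t := ht.1
  have hsub : Set.Icc a t ⊆ Set.Icc a b := Set.Icc_subset_Icc le_rfl ht.2
  have hsub' : Set.Ioc a t ⊆ Set.Icc a b := Set.Ioc_subset_Icc_self.trans hsub
  have hm' : AEStronglyMeasurable h (volume.restrict (Set.Ioc a t)) := hm.mono_set hsub'
  have hi' : IntegrableOn h (Set.Ioc a t) := hi.mono_set hsub'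
  have hii : IntervalIntegrable h volume a t :=
    (intervalIntegrable_iff_integrableOn_Ioc_of_le hat).2 hi'
  -- bounds for Z, deriv Z, and u on [a, t]
  obtain ⟨Cz, hCz⟩ : ∃ C, ∀ r ∈ Set.Icc a t, ‖Z r‖ ≤ C :=
    isCompact_Icc.exists_bound_of_continuousOn hZc.continuousOn
  -- integrability of the various integrands on `a..t`
  have hint1 : IntervalIntegrable (fun s => G (h s) (Z s)) volume a t := by
    rw [intervalIntegrable_iff_integrableOn_Ioc_of_le hat]
    refine (Integrable.mono' ((hi'.norm.const_mul (‖G‖ * Cz)))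
      (G.aestronglyMeasurable_comp₂ hm' (hZc.aestronglyMeasurable)) ?_ : _)
    filter_upwards [ae_restrict_mem measurableSet_Ioc] with s hs
    calc ‖G (h s) (Z s)‖ ≤ ‖G (h s)‖ * ‖Z s‖ := (G (h s)).le_opNorm _
      _ ≤ (‖G‖ * ‖h s‖) * Cz :=
          mul_le_mul (G.le_opNorm _) (hCz _ (Set.Ioc_subset_Icc_self hs))
            (norm_nonneg _) (by positivity)
      _ = ‖G‖ * Cz * ‖h s‖ := by ring
  have hZt1 : ∀ s, G (h s) (Z t) = G (h s) (Z s) + ∫ r in s..t, G (h s) (deriv Z r) := by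
    intro s
    have hd : ∀ x ∈ Set.uIcc s t, HasDerivAt (fun r => G (h s) (Z r)) (G (h s) (deriv Z x)) x :=
      fun x _ => (G (h s)).hasFDerivAt.comp_hasDerivAt x (hZd x)
    have hci : IntervalIntegrable (fun r => G (h s) (deriv Z r)) volume s t :=
      (((G (h s)).continuous.comp hZ'c).continuousOn).intervalIntegrable
    have := intervalIntegral.integral_eq_sub_of_hasDerivAt hd hci
    linarith [this]
  have hint4 : IntervalIntegrable (fun s => ∫ r in s..t, G (h s) (deriv Z r)) volume a t := by
    have : (fun s => ∫ r in s..t, G (h s) (deriv Z r))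
        = fun s => G (h s) (Z t) - G (h s) (Z s) := by
      funext s; have := hZt1 s; linarith
    rw [this]
    apply IntervalIntegrable.sub ?_ hint1
    rw [intervalIntegrable_iff_integrableOn_Ioc_of_le hat]
    refine (Integrable.mono' ((hi'.norm.const_mul (‖G‖ * ‖Z t‖)))
      (G.aestronglyMeasurable_comp₂ hm' aestronglyMeasurable_const) ?_ : _)
    filter_upwards with s
    calc ‖G (h s) (Z t)‖ ≤ ‖G (h s)‖ * ‖Z t‖ := (G (h s)).le_opNorm _
      _ ≤ (‖G‖ * ‖h s‖) * ‖Z t‖ :=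
          mul_le_mul_of_nonneg_right (G.le_opNorm _) (norm_nonneg _)
      _ = ‖G‖ * ‖Z t‖ * ‖h s‖ := by ring
  have hint2 : IntervalIntegrable (fun s => G (u s) (deriv Z s)) volume a t := by
    apply ContinuousOn.intervalIntegrable
    rw [Set.uIcc_of_le hat]
    exact (G.continuous₂.comp_continuousOn
      ((huC.mono hsub).prodMk (hZ'c.continuousOn)))
  have hint3 : IntervalIntegrable (fun s => G (u a) (deriv Z s)) volume a t :=
    (((G (u a)).continuous.comp hZ'c).continuousOn).intervalIntegrable
  have heq : ∀ s ∈ Set.uIcc a t,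
      (∫ r in a..s, G (h r) (deriv Z s)) = G (u s) (deriv Z s) - G (u a) (deriv Z s) := by
    intro s hs
    rw [Set.uIcc_of_le hat] at hs
    have hii_s : IntervalIntegrable h volume a s :=
      (intervalIntegrable_iff_integrableOn_Ioc_of_le hs.1).2
        (hi'.mono_set (Set.Ioc_subset_Ioc le_rfl hs.2))
    have h2 : (∫ r in a..s, G (h r) (deriv Z s)) = G (∫ r in a..s, h r) (deriv Z s) := by
      have := (G.flip (deriv Z s)).intervalIntegral_comp_comm hii_s
      simpa using this
    rw [h2, hu s (hsub hs)]
    simp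
  have hint5 : IntervalIntegrable (fun s => ∫ r in a..s, G (h r) (deriv Z s)) volume a t := by
    rw [intervalIntegrable_iff_integrableOn_Ioc_of_le hat]
    have hbase : IntegrableOn (fun s => G (u s) (deriv Z s) - G (u a) (deriv Z s))
        (Set.Ioc a t) volume := by
      rw [← intervalIntegrable_iff_integrableOn_Ioc_of_le hat]
      exact hint2.sub hint3
    refine IntegrableOn.congr_fun hbase (fun s hs => ?_) measurableSet_Ioc
    rw [heq s (by rw [Set.uIcc_of_le hat]; exact Set.Ioc_subset_Icc_self hs)]
  -- the Fubini exchange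
  have hfub : (∫ s in a..t, ∫ r in s..t, G (h s) (deriv Z r))
      = ∫ s in a..t, ∫ r in a..s, G (h r) (deriv Z s) := by
    rw [intervalIntegral.integral_of_le hat, intervalIntegral.integral_of_le hat]
    have hL : ∀ s ∈ Set.Ioc a t, (∫ r in s..t, G (h s) (deriv Z r))
        = ∫ r in Set.Ioc a t, (if s < r then G (h s) (deriv Z r) else 0) := by
      intro s hs
      rw [intervalIntegral.integral_of_le hs.2]
      have hset : Set.Ioc s t = Set.Ioi s ∩ Set.Ioc a t := by
        ext r
        simp only [Set.mem_Ioc, Set.mem_inter_iff, Set.mem_Ioi]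
        exact ⟨fun ⟨h1, h2⟩ => ⟨h1, lt_of_le_of_lt hs.1.le h1, h2⟩,
          fun ⟨h1, _, h2⟩ => ⟨h1, h2⟩⟩
      rw [hset, ← Measure.restrict_restrict measurableSet_Ioi,
        ← MeasureTheory.integral_indicator measurableSet_Ioi]
      refine integral_congr_ae (Filter.Eventually.of_forall fun r => ?_)
      simp [Set.indicator_apply]
    have hR : ∀ s ∈ Set.Ioc a t, (∫ r in a..s, G (h r) (deriv Z s))
        = ∫ r in Set.Ioc a t, (if r ≤ s then G (h r) (deriv Z s) else 0) := by
      intro s hs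
      rw [intervalIntegral.integral_of_le hs.1.le]
      have hset : Set.Ioc a s = Set.Iic s ∩ Set.Ioc a t := by
        ext r
        simp only [Set.mem_Ioc, Set.mem_inter_iff, Set.mem_Iic]
        exact ⟨fun ⟨h1, h2⟩ => ⟨h2, h1, h2.trans hs.2⟩,
          fun ⟨h1, h2, _⟩ => ⟨h2, h1⟩⟩
      rw [hset, ← Measure.restrict_restrict measurableSet_Iic,
        ← MeasureTheory.integral_indicator measurableSet_Iic]
      refine integral_congr_ae (Filter.Eventually.of_forall fun r => ?_)
      simp [Set.indicator_apply]
    rw [setIntegral_congr_fun measurableSet_Ioc hL, setIntegral_congr_fun measurableSet_Ioc hR]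
    exact fubini_triangle G hat hm' hi' hZ'c
  -- the two expansions
  have hexp1 : (∫ s in a..t, G (h s) (Z t))
      = (∫ s in a..t, G (h s) (Z s)) + ∫ s in a..t, ∫ r in s..t, G (h s) (deriv Z r) := by
    rw [← intervalIntegral.integral_add hint1 hint4]
    exact intervalIntegral.integral_congr fun s _ => hZt1 s
  have hexp2 : (∫ s in a..t, G (u s) (deriv Z s))
      = (∫ s in a..t, G (u a) (deriv Z s)) + ∫ s in a..t, ∫ r in a..s, G (h r) (deriv Z s) := by
    rw [← intervalIntegral.integral_add hint3 hint5]
    refine intervalIntegral.integral_congr fun s hs => ?_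
    rw [heq s hs]; ring
  -- expansion of the left-hand side
  have hlhs1 : G (u t) (Z t) = G (u a) (Z t) + ∫ s in a..t, G (h s) (Z t) := by
    rw [hu t ht]
    have h2 : (∫ s in a..t, G (h s) (Z t)) = G (∫ s in a..t, h s) (Z t) := by
      have := (G.flip (Z t)).intervalIntegral_comp_comm hii
      simpa using this
    rw [h2]
    simp
  have hlhs2 : G (u a) (Z t) = G (u a) (Z a) + ∫ s in a..t, G (u a) (deriv Z s) := by
    have hd : ∀ x ∈ Set.uIcc a t, HasDerivAt (fun r => G (u a) (Z r)) (G (u a) (deriv Z x)) x :=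
      fun x _ => (G (u a)).hasFDerivAt.comp_hasDerivAt x (hZd x)
    have := intervalIntegral.integral_eq_sub_of_hasDerivAt hd hint3
    linarith
  have hsplit : (∫ s in a..t, (G (h s) (Z s) + G (u s) (deriv Z s)))
      = (∫ s in a..t, G (h s) (Z s)) + ∫ s in a..t, G (u s) (deriv Z s) :=
    intervalIntegral.integral_add hint1 hint2
  rw [hsplit]
  have e1 := hexp1
  have e2 := hexp2
  rw [hfub] at e1
  linarith

lemma hasDerivWithinAt_g (g : Rn n →ₗ[ℝ] Rn n →ₗ[ℝ] ℝ) {u w : ℝ → Rn n} {u' w' : Rn n}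
    {s : Set ℝ} {t : ℝ} (hu : HasDerivWithinAt u u' s t) (hw : HasDerivWithinAt w w' s t) :
    HasDerivWithinAt (fun r => g (u r) (w r)) (g u' (w t) + g (u t) w') s t := by
  have h1 : HasDerivWithinAt (fun r => Gc g (u r)) (Gc g u') s t :=
    (Gc g).hasFDerivAt.comp_hasDerivWithinAt t hu
  simpa using h1.clm_apply hw

lemma continuousOn_g (g : Rn n →ₗ[ℝ] Rn n →ₗ[ℝ] ℝ) {u w : ℝ → Rn n} {s : Set ℝ}
    (hu : ContinuousOn u s) (hw : ContinuousOn w s) :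
    ContinuousOn (fun r => g (u r) (w r)) s := by
  have : ContinuousOn (fun r => Gc g (u r) (w r)) s :=
    ContinuousOn.clm_apply ((Gc g).continuous.comp_continuousOn hu) hw
  simpa using this

lemma differentiableWithinAt_det {M : ℝ → Matrix (Fin k) (Fin k) ℝ} {s : Set ℝ} {t : ℝ}
    (h : ∀ i j, DifferentiableWithinAt ℝ (fun r => M r i j) s t) :
    DifferentiableWithinAt ℝ (fun r => (M r).det) s t := by
  simp only [Matrix.det_apply']
  exact DifferentiableWithinAt.fun_sum fun σ _ =>
    ((DifferentiableWithinAt.fun_finsetProd fun i _ => h (σ i) i).const_mul _)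

lemma differentiableWithinAt_inv_entry {M : ℝ → Matrix (Fin k) (Fin k) ℝ} {s : Set ℝ} {t : ℝ}
    (h : ∀ i j, DifferentiableWithinAt ℝ (fun r => M r i j) s t)
    (hdet : (M t).det ≠ 0) (i j : Fin k) :
    DifferentiableWithinAt ℝ (fun r => (M r)⁻¹ i j) s t := by
  have hadj : DifferentiableWithinAt ℝ (fun r => (M r).adjugate i j) s t := by
    simp only [Matrix.adjugate_apply]
    apply differentiableWithinAt_det
    intro i' j'
    rcases eq_or_ne i' j with rfl | hne
    · simp only [Matrix.updateRow_self]
      exact differentiableWithinAt_const _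
    · simp only [Matrix.updateRow_ne hne]
      exact h i' j'
  have : DifferentiableWithinAt ℝ (fun r => ((M r).det)⁻¹ * (M r).adjugate i j) s t :=
    ((differentiableWithinAt_det h).inv hdet).mul hadj
  refine this.congr (fun y _ => ?_) ?_
  · rw [Matrix.inv_def, Matrix.smul_apply, Ring.inverse_eq_inv', smul_eq_mul]
  · rw [Matrix.inv_def, Matrix.smul_apply, Ring.inverse_eq_inv', smul_eq_mul]

lemma g_sum_left (g : Rn n →ₗ[ℝ] Rn n →ₗ[ℝ] ℝ) (x : Fin k → ℝ) (Z : Fin k → Rn n) (w : Rn n) :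
    g (∑ i, x i • Z i) w = ∑ i, x i * g (Z i) w := by
  simp [map_sum, LinearMap.sum_apply, _root_.map_smul, smul_eq_mul]

lemma calB_isUnit_det (g : Rn n →ₗ[ℝ] Rn n →ₗ[ℝ] ℝ) (Y : Fin k → ℝ → Rn n) {t : ℝ}
    (hYind : LinearIndependent ℝ (fun i => Y i t))
    (hYneg : ∀ x ∈ Dt Y t, x ≠ 0 → (g x) x < 0) :
    IsUnit (calB g Y t).det := by
  rw [isUnit_iff_ne_zero]
  intro hdet
  obtain ⟨x, hx0, hBx⟩ := (Matrix.exists_mulVec_eq_zero_iff).2 hdet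
  set z : Rn n := ∑ i, x i • Y i t with hz
  have hzmem : z ∈ Dt Y t :=
    Submodule.sum_mem _ fun i _ =>
      Submodule.smul_mem _ _ (Submodule.subset_span ⟨i, rfl⟩)
  have hzne : z ≠ 0 := by
    intro hzz
    apply hx0
    have := Fintype.linearIndependent_iff.1 hYind x (by rw [← hz]; exact hzz)
    funext i; exact this i
  have hgz : g z z = 0 := by
    have hcomp : ∀ j, (calB g Y t *ᵥ x) j = g (Y j t) z := by
      intro j
      simp [Matrix.mulVec, dotProduct, calB, hz, map_sum, _root_.map_smul, smul_eq_mul,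
        Finset.mul_sum, mul_comm]
    have : g z z = ∑ j, x j * g (Y j t) z := g_sum_left g x _ z
    rw [this]
    have : ∀ j, x j * g (Y j t) z = x j * (calB g Y t *ᵥ x) j := by
      intro j; rw [hcomp j]
    simp only [this, hBx]
    simp
  exact absurd hgz (ne_of_lt (hYneg z hzmem hzne))

lemma alg1 (g : Rn n →ₗ[ℝ] Rn n →ₗ[ℝ] ℝ) (hgsym : ∀ x y, g x y = g y x)
    (Y : Fin k → ℝ → Rn n) (t : ℝ) (d f0 : Fin k → ℝ) (j : Fin k) :
    g (∑ i, d i • Y i t + ∑ i, f0 i • deriv (Y i) t) (Y j t)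
      = (calB g Y t *ᵥ d) j + (calC g Y t *ᵥ f0) j := by
  rw [map_add, LinearMap.add_apply, g_sum_left, g_sum_left]
  simp only [Matrix.mulVec, dotProduct, calB, calC]
  congr 1
  · refine Finset.sum_congr rfl fun i _ => ?_
    rw [hgsym]; ring
  · refine Finset.sum_congr rfl fun i _ => ?_
    ring

lemma alg2 (g : Rn n →ₗ[ℝ] Rn n →ₗ[ℝ] ℝ) (hgsym : ∀ x y, g x y = g y x)
    (R : ℝ → Rn n →L[ℝ] Rn n) (t : ℝ)
    (hRt : ∀ x y, g (R t x) y = g x (R t y))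
    (Y : Fin k → ℝ → Rn n) (d f0 : Fin k → ℝ) (j : Fin k) :
    g (∑ i, d i • Y i t + ∑ i, f0 i • deriv (Y i) t) (deriv (Y j) t)
      + g (R t (∑ i, f0 i • Y i t)) (Y j t)
      = ((calC g Y t)ᵀ *ᵥ d) j + (calI g R Y t *ᵥ f0) j := by
  have hRsum : g (R t (∑ i, f0 i • Y i t)) (Y j t) = ∑ i, f0 i * g (R t (Y i t)) (Y j t) := by
    rw [map_sum]
    simp only [_root_.map_smul]
    exact g_sum_left g f0 (fun i => R t (Y i t)) (Y j t)
  rw [map_add, LinearMap.add_apply, g_sum_left, g_sum_left, hRsum]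
  simp only [Matrix.mulVec, dotProduct, Matrix.transpose_apply, calC, calI, add_mul,
    Finset.sum_add_distrib]
  have e1 : ∑ i, d i * g (Y i t) (deriv (Y j) t) = ∑ i, g (deriv (Y j) t) (Y i t) * d i :=
    Finset.sum_congr rfl fun i _ => by rw [hgsym]; ring
  have e2 : ∑ i, f0 i * g (deriv (Y i) t) (deriv (Y j) t)
      = ∑ i, g (deriv (Y j) t) (deriv (Y i) t) * f0 i :=
    Finset.sum_congr rfl fun i _ => by rw [hgsym]; ring
  have e3 : ∑ i, f0 i * g (R t (Y i t)) (Y j t) = ∑ i, g (R t (Y j t)) (Y i t) * f0 i :=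
    Finset.sum_congr rfl fun i _ => by rw [hRt, ← hgsym]; ring
  rw [e1, e2, e3]
  ring

lemma continuousOn_sum' {ι : Type*} (u : Finset ι) {F : ι → ℝ → ℝ} {s : Set ℝ}
    (h : ∀ i ∈ u, ContinuousOn (F i) s) :
    ContinuousOn (fun t => ∑ i ∈ u, F i t) s := fun t ht =>
  tendsto_finset_sum u fun i hi => h i hi t ht

lemma contOn_mulVec {k : ℕ} {M : ℝ → Matrix (Fin k) (Fin k) ℝ} {x : ℝ → Fin k → ℝ} {s : Set ℝ}
    (hM : ∀ i j, ContinuousOn (fun t => M t i j) s)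
    (hx : ∀ j, ContinuousOn (fun t => x t j) s) (i : Fin k) :
    ContinuousOn (fun t => (M t *ᵥ x t) i) s := by
  simp only [Matrix.mulVec, dotProduct]
  exact continuousOn_sum' _ fun j _ => (hM i j).mul (hx j)

lemma diffWithin_mulVec {k : ℕ} {M : ℝ → Matrix (Fin k) (Fin k) ℝ} {x : ℝ → Fin k → ℝ}
    {s : Set ℝ} {t : ℝ}
    (hM : ∀ i j, DifferentiableWithinAt ℝ (fun r => M r i j) s t)
    (hx : ∀ j, DifferentiableWithinAt ℝ (fun r => x r j) s t) (i : Fin k) :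
    DifferentiableWithinAt ℝ (fun r => (M r *ᵥ x r) i) s t := by
  simp only [Matrix.mulVec, dotProduct]
  exact DifferentiableWithinAt.fun_sum fun j _ => (hM i j).mul (hx j)

lemma contOn_matmul {k : ℕ} {M N : ℝ → Matrix (Fin k) (Fin k) ℝ} {s : Set ℝ}
    (hM : ∀ i j, ContinuousOn (fun t => M t i j) s)
    (hN : ∀ i j, ContinuousOn (fun t => N t i j) s) :
    ∀ i j, ContinuousOn (fun t => (M t * N t) i j) s := by
  intro i j
  simp only [Matrix.mul_apply]
  exact continuousOn_sum' _ fun l _ => (hM i l).mul (hN l j)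

end MKRS

/-- Let `v ∈ 𝔖` and write `v = ∑ᵢ fᵢ Yᵢ`.  Then `v ∈ 𝒦` if and only if `f` is a solution
of the reduced symplectic system, i.e. there exists a (C¹) map `φ : [a,b] → ℝ^{k*}` with
`f' = −𝓑⁻¹𝓒 f − 𝓑⁻¹φ` and `φ' = (𝓒*𝓑⁻¹𝓒 − 𝓘) f + 𝓒*𝓑⁻¹φ`. -/
theorem mem_K_iff_reduced_solution
    {n k : ℕ} (a b : ℝ) (hab : a < b)
    (g : Rn n →ₗ[ℝ] Rn n →ₗ[ℝ] ℝ)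
    (hgsym : ∀ x y, g x y = g y x)
    (hgnd : ∀ x, (∀ y, g x y = 0) → x = 0)
    (R : ℝ → Rn n →L[ℝ] Rn n)
    (hR : ContinuousOn R (Set.Icc a b))
    (hRsym : ∀ t ∈ Set.Icc a b, ∀ x y, g (R t x) y = g x (R t y))
    (P : Submodule ℝ (Rn n))
    (hP : ∀ x ∈ P, (∀ y ∈ P, g x y = 0) → x = 0)
    (S : Rn n →ₗ[ℝ] Rn n →ₗ[ℝ] ℝ)
    (hSsym : ∀ x y, S x y = S y x)
    (Y : Fin k → ℝ → Rn n)
    (hYsm : ∀ i, ContDiff ℝ (⊤ : ℕ∞) (Y i))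
    (hYind : ∀ t ∈ Set.Icc a b, LinearIndependent ℝ (fun i => Y i t))
    (hYneg : ∀ t ∈ Set.Icc a b, ∀ x ∈ Dt Y t, x ≠ 0 → g x x < 0)
    (hYmax : ∀ W : Submodule ℝ (Rn n), negDefOn (fun x y => g x y) W →
      Module.rank ℝ W ≤ k)
    (v : ℝ → Rn n) (hv : v ∈ Scal a b Y)
    (f : ℝ → Fin k → ℝ)
    (hf : ∀ t ∈ Set.Icc a b, v t = ∑ i : Fin k, f t i • Y i t) :
    v ∈ Kcal a b g R P Y ↔ ∃ φ : ℝ → Fin k → ℝ, ReducedSol a b g R Y f φ := by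
  classical
  have hUD : UniqueDiffOn ℝ (Set.Icc a b) := uniqueDiffOn_Icc hab
  haveI : Fact ((volume : Measure ℝ) (Set.Icc a b) < ⊤) := ⟨measure_Icc_lt_top⟩
  have hvH1 : IsH1 a b v := hv.1
  have hva : v a = 0 := hv.2.1
  have hvb : v b = 0 := hv.2.2.1
  have hYc : ∀ i, Continuous (Y i) := fun i => (hYsm i).continuous
  have hone : (1 : ℕ∞) ≤ (⊤ : ℕ∞) := le_top
  have hYd : ∀ (i) (t : ℝ), HasDerivAt (Y i) (deriv (Y i) t) t :=
    fun i t => ((hYsm i).differentiable (by simp) t).hasDerivAt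
  have hY'c : ∀ i, Continuous (deriv (Y i)) :=
    fun i => (hYsm i).continuous_deriv (by exact_mod_cast hone)
  have hBu : ∀ t ∈ Set.Icc a b, IsUnit (calB g Y t).det :=
    fun t ht => MKRS.calB_isUnit_det g Y (hYind t ht) (fun x hx hx0 => hYneg t ht x hx hx0)
  have hBd : ∀ (i j : Fin k) (t : ℝ), HasDerivWithinAt (fun r => calB g Y r i j)
      (g (deriv (Y i) t) (Y j t) + g (Y i t) (deriv (Y j) t)) (Set.Icc a b) t :=
    fun i j t => MKRS.hasDerivWithinAt_g g ((hYd i t).hasDerivWithinAt)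
      ((hYd j t).hasDerivWithinAt)
  have hBC : ∀ i j, ContinuousOn (fun t => calB g Y t i j) (Set.Icc a b) :=
    fun i j => MKRS.continuousOn_g g (hYc i).continuousOn (hYc j).continuousOn
  have hCC : ∀ i j, ContinuousOn (fun t => calC g Y t i j) (Set.Icc a b) :=
    fun i j => MKRS.continuousOn_g g (hY'c j).continuousOn (hYc i).continuousOn
  have hCTC : ∀ i j, ContinuousOn (fun t => (calC g Y t)ᵀ i j) (Set.Icc a b) := by
    intro i j
    simp only [Matrix.transpose_apply]
    exact hCC j i
  have hIC : ∀ i j, ContinuousOn (fun t => calI g R Y t i j) (Set.Icc a b) := by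
    intro i j
    apply ContinuousOn.add
    · exact MKRS.continuousOn_g g (hY'c i).continuousOn (hY'c j).continuousOn
    · exact MKRS.continuousOn_g g (hR.clm_apply (hYc i).continuousOn) (hYc j).continuousOn
  have hBinvD : ∀ (i j : Fin k) {t : ℝ}, t ∈ Set.Icc a b →
      DifferentiableWithinAt ℝ (fun r => (calB g Y r)⁻¹ i j) (Set.Icc a b) t := by
    intro i j t ht
    exact MKRS.differentiableWithinAt_inv_entry
      (fun i' j' => (hBd i' j' t).differentiableWithinAt) (hBu t ht).ne_zero i j
  have hBinvC : ∀ i j, ContinuousOn (fun r => (calB g Y r)⁻¹ i j) (Set.Icc a b) :=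
    fun i j t ht => (hBinvD i j ht).continuousWithinAt
  have hBfY : ∀ t ∈ Set.Icc a b, calB g Y t *ᵥ f t = fun j => g (v t) (Y j t) := by
    intro t ht
    funext j
    show (calB g Y t *ᵥ f t) j = g (v t) (Y j t)
    rw [hf t ht, MKRS.g_sum_left]
    simp only [Matrix.mulVec, dotProduct, calB]
    exact Finset.sum_congr rfl fun i _ => by rw [hgsym]; ring
  have hfB : ∀ t ∈ Set.Icc a b, f t = (calB g Y t)⁻¹ *ᵥ (fun j => g (v t) (Y j t)) := by
    intro t ht
    rw [← hBfY t ht, Matrix.mulVec_mulVec, Matrix.nonsing_inv_mul _ (hBu t ht),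
      Matrix.one_mulVec]
  have hvdgen : ∀ (dv : Fin k → ℝ) {t : ℝ}, t ∈ Set.Icc a b →
      HasDerivWithinAt f dv (Set.Icc a b) t →
      HasDerivWithinAt v (∑ i, dv i • Y i t + ∑ i, f t i • deriv (Y i) t) (Set.Icc a b) t := by
    intro dv t ht hfd
    have h1 : ∀ i : Fin k, HasDerivWithinAt (fun r => f r i • Y i r)
        (f t i • deriv (Y i) t + dv i • Y i t) (Set.Icc a b) t :=
      fun i => (hasDerivWithinAt_pi.1 hfd i).smul ((hYd i t).hasDerivWithinAt)
    have h2 := HasDerivWithinAt.fun_sum (u := Finset.univ) (fun i _ => h1 i)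
    have h3 : HasDerivWithinAt (fun r => ∑ i, f r i • Y i r)
        (∑ i, dv i • Y i t + ∑ i, f t i • deriv (Y i) t) (Set.Icc a b) t := by
      refine h2.congr_deriv ?_
      rw [← Finset.sum_add_distrib]
      exact Finset.sum_congr rfl fun i _ => add_comm _ _
    exact h3.congr (fun y hy => hf y hy) (hf t ht)
  have hdervgen : ∀ (dv : Fin k → ℝ) {t : ℝ}, t ∈ Set.Icc a b →
      HasDerivWithinAt f dv (Set.Icc a b) t →
      der a b v t = ∑ i, dv i • Y i t + ∑ i, f t i • deriv (Y i) t := by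
    intro dv t ht hfd
    simp only [der, Set.indicator_of_mem ht]
    exact (hvdgen dv ht hfd).derivWithin (hUD t ht)
  refine ⟨fun hK => ?_, fun hsol => ?_⟩
  · obtain ⟨hHcal, hKi⟩ := hK
    choose w hwH1 hwae1 hwae2 using hKi
    have hvC : ContinuousOn v (Set.Icc a b) := MKRS.isH1_continuousOn hab.le hvH1
    have hwC : ∀ j, ContinuousOn (w j) (Set.Icc a b) :=
      fun j => MKRS.isH1_continuousOn hab.le (hwH1 j)
    set W : ℝ → Fin k → ℝ := fun t j => w j t with hW
    set φ : ℝ → Fin k → ℝ := fun t => -(W t) with hφ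
    set γ : ℝ → Fin k → ℝ := fun s j => w j s + g (v s) (deriv (Y j) s) with hγ
    have hγC : ∀ j, ContinuousOn (fun s => γ s j) (Set.Icc a b) :=
      fun j => (hwC j).add (MKRS.continuousOn_g g hvC (hY'c j).continuousOn)
    have hcprim : ∀ (j : Fin k), ∀ t ∈ Set.Icc a b,
        g (v t) (Y j t) = g (v a) (Y j a) + ∫ s in a..t, γ s j := by
      intro j t ht
      have h0 := MKRS.ibp_primitive (MKRS.Gc g) hvH1.1.1 (MKRS.isH1_integrableOn hvH1)
        hvH1.2.1 hvC (hYc j) (hY'c j) (hYd j) ht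
      simp only [MKRS.Gc_apply] at h0
      have h2 : (∫ s in a..t, (g (der a b v s) (Y j s) + g (v s) (deriv (Y j) s)))
          = ∫ s in a..t, γ s j := by
        rw [intervalIntegral.integral_of_le ht.1, intervalIntegral.integral_of_le ht.1]
        refine integral_congr_ae ?_
        have h1' := ae_restrict_of_ae_restrict_of_subset
          (Set.Ioc_subset_Icc_self.trans (Set.Icc_subset_Icc le_rfl ht.2)) (hwae1 j)
        filter_upwards [h1'] with s hs
        show g (der a b v s) (Y j s) + g (v s) (deriv (Y j) s) = γ s j
        have : γ s j = w j s + g (v s) (deriv (Y j) s) := rfl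
        rw [this, ← hs]
      rw [h0, h2]
    have hcd : ∀ (j : Fin k), ∀ t ∈ Set.Icc a b,
        HasDerivWithinAt (fun r => g (v r) (Y j r)) (γ t j) (Set.Icc a b) t := by
      intro j t ht
      have hpr := (MKRS.hasDerivWithinAt_primitive_Icc (hγC j) ht).const_add (g (v a) (Y j a))
      exact hpr.congr (fun y hy => hcprim j y hy) (hcprim j t ht)
    have hfD : ∀ t ∈ Set.Icc a b, DifferentiableWithinAt ℝ f (Set.Icc a b) t := by
      intro t ht
      have h1 : DifferentiableWithinAt ℝ
          (fun r => (calB g Y r)⁻¹ *ᵥ (fun j => g (v r) (Y j r))) (Set.Icc a b) t := by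
        refine differentiableWithinAt_pi.2 fun j => ?_
        exact MKRS.diffWithin_mulVec (fun i' j' => hBinvD i' j' ht)
          (fun j' => (hcd j' t ht).differentiableWithinAt) j
      exact h1.congr (fun y hy => hfB y hy) (hfB t ht)
    set d : ℝ → Fin k → ℝ := fun t => derivWithin f (Set.Icc a b) t with hd
    have hfd2 : ∀ t ∈ Set.Icc a b, HasDerivWithinAt f (d t) (Set.Icc a b) t :=
      fun t ht => (hfD t ht).hasDerivWithinAt
    have hmain : ∀ t ∈ Set.Icc a b, ∀ j,
        (calB g Y t *ᵥ d t) j + (calC g Y t *ᵥ f t) j = w j t := by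
      intro t ht j
      have hA := MKRS.hasDerivWithinAt_g g (hvdgen (d t) ht (hfd2 t ht))
        ((hYd j t).hasDerivWithinAt)
      have e1 := hA.derivWithin (hUD t ht)
      have e2 := (hcd j t ht).derivWithin (hUD t ht)
      have e3 := e1.symm.trans e2
      have e4 : γ t j = w j t + g (v t) (deriv (Y j) t) := rfl
      have e5 := MKRS.alg1 g hgsym Y t (d t) (f t) j
      rw [e5, e4] at e3
      linarith
    have hBdeq : ∀ t ∈ Set.Icc a b, calB g Y t *ᵥ d t = W t - calC g Y t *ᵥ f t := by
      intro t ht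
      funext j
      have h1 := hmain t ht j
      have h2 : W t j = w j t := rfl
      simp only [Pi.sub_apply]
      rw [h2]
      linarith
    have hdeq : ∀ t ∈ Set.Icc a b,
        d t = -(((calB g Y t)⁻¹ * calC g Y t) *ᵥ f t) - (calB g Y t)⁻¹ *ᵥ φ t := by
      intro t ht
      have h1 : d t = (calB g Y t)⁻¹ *ᵥ (calB g Y t *ᵥ d t) := by
        rw [Matrix.mulVec_mulVec, Matrix.nonsing_inv_mul _ (hBu t ht), Matrix.one_mulVec]
      rw [h1, hBdeq t ht]
      show (calB g Y t)⁻¹ *ᵥ (W t - calC g Y t *ᵥ f t)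
          = -(((calB g Y t)⁻¹ * calC g Y t) *ᵥ f t) - (calB g Y t)⁻¹ *ᵥ (-(W t))
      rw [Matrix.mulVec_sub, Matrix.mulVec_neg, ← Matrix.mulVec_mulVec]
      abel
    have hfC : ContinuousOn f (Set.Icc a b) := fun t ht => (hfD t ht).continuousWithinAt
    have hfCi : ∀ i, ContinuousOn (fun t => f t i) (Set.Icc a b) :=
      fun i => (continuous_apply i).comp_continuousOn hfC
    have hφCi : ∀ i, ContinuousOn (fun t => φ t i) (Set.Icc a b) := by
      intro i
      show ContinuousOn (fun t => -(w i t)) (Set.Icc a b)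
      exact (hwC i).neg
    have hdCi : ∀ i, ContinuousOn (fun t => d t i) (Set.Icc a b) := by
      intro i
      have hrhs : ContinuousOn (fun t =>
          -((((calB g Y t)⁻¹ * calC g Y t) *ᵥ f t) i) - ((calB g Y t)⁻¹ *ᵥ φ t) i)
          (Set.Icc a b) :=
        ((MKRS.contOn_mulVec (MKRS.contOn_matmul hBinvC hCC) hfCi i).neg).sub
          (MKRS.contOn_mulVec hBinvC hφCi i)
      refine hrhs.congr fun t ht => ?_
      rw [hdeq t ht]
      rfl
    have hψ2C : ∀ j, ContinuousOn
        (fun t => ((calC g Y t)ᵀ *ᵥ d t) j + (calI g R Y t *ᵥ f t) j) (Set.Icc a b) :=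
      fun j => (MKRS.contOn_mulVec hCTC hdCi j).add (MKRS.contOn_mulVec hIC hfCi j)
    have hwd : ∀ (j : Fin k), ∀ t ∈ Set.Icc a b, HasDerivWithinAt (w j)
        (((calC g Y t)ᵀ *ᵥ d t) j + (calI g R Y t *ᵥ f t) j) (Set.Icc a b) t := by
      intro j t ht
      refine MKRS.isH1_hasDerivWithinAt (hwH1 j) (hψ2C j) ?_ ht
      filter_upwards [hwae2 j, ae_restrict_mem measurableSet_Icc] with s hs hsI
      rw [hs, hdervgen (d s) hsI (hfd2 s hsI), hf s hsI]
      exact MKRS.alg2 g hgsym R s (hRsym s hsI) Y (d s) (f s) j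
    refine ⟨φ, fun t ht => ⟨?_, ?_⟩⟩
    · have h1 := hfd2 t ht
      rwa [hdeq t ht] at h1
    · have hφd : HasDerivWithinAt φ
          (fun j => -(((calC g Y t)ᵀ *ᵥ d t) j + (calI g R Y t *ᵥ f t) j))
          (Set.Icc a b) t := by
        refine hasDerivWithinAt_pi.2 fun j => ?_
        exact (hwd j t ht).neg
      have hval : (fun j => -(((calC g Y t)ᵀ *ᵥ d t) j + (calI g R Y t *ᵥ f t) j))
          = (((calC g Y t)ᵀ * (calB g Y t)⁻¹ * calC g Y t - calI g R Y t) *ᵥ f t)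
            + ((calC g Y t)ᵀ * (calB g Y t)⁻¹) *ᵥ φ t := by
        funext j
        rw [hdeq t ht]
        simp only [Matrix.mulVec_sub, Matrix.mulVec_neg, Matrix.mulVec_mulVec,
          Matrix.sub_mulVec, Matrix.mul_assoc, Pi.add_apply, Pi.sub_apply, Pi.neg_apply]
        ring
      rwa [hval] at hφd
  · -- reverse direction
    obtain ⟨φ, hsol⟩ := hsol
    have hfd : ∀ t ∈ Set.Icc a b, HasDerivWithinAt f
        (-(((calB g Y t)⁻¹ * calC g Y t) *ᵥ f t) - (calB g Y t)⁻¹ *ᵥ φ t) (Set.Icc a b) t :=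
      fun t ht => (hsol t ht).1
    set df : ℝ → Fin k → ℝ :=
      fun t => -(((calB g Y t)⁻¹ * calC g Y t) *ᵥ f t) - (calB g Y t)⁻¹ *ᵥ φ t with hdf
    set ψ : ℝ → Fin k → ℝ := fun t =>
      ((((calC g Y t)ᵀ * (calB g Y t)⁻¹ * calC g Y t - calI g R Y t) *ᵥ f t)
        + ((calC g Y t)ᵀ * (calB g Y t)⁻¹) *ᵥ φ t) with hψ
    have hφd : ∀ t ∈ Set.Icc a b, HasDerivWithinAt φ (ψ t) (Set.Icc a b) t :=
      fun t ht => (hsol t ht).2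
    have hfC : ContinuousOn f (Set.Icc a b) := fun t ht => (hfd t ht).continuousWithinAt
    have hφC : ContinuousOn φ (Set.Icc a b) := fun t ht => (hφd t ht).continuousWithinAt
    have hfCi : ∀ i, ContinuousOn (fun t => f t i) (Set.Icc a b) :=
      fun i => (continuous_apply i).comp_continuousOn hfC
    have hφCi : ∀ i, ContinuousOn (fun t => φ t i) (Set.Icc a b) :=
      fun i => (continuous_apply i).comp_continuousOn hφC
    have hvd : ∀ t ∈ Set.Icc a b, HasDerivWithinAt v
        (∑ i, df t i • Y i t + ∑ i, f t i • deriv (Y i) t) (Set.Icc a b) t :=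
      fun t ht => hvdgen (df t) ht (hfd t ht)
    have hderv : ∀ t ∈ Set.Icc a b,
        der a b v t = ∑ i, df t i • Y i t + ∑ i, f t i • deriv (Y i) t :=
      fun t ht => hdervgen (df t) ht (hfd t ht)
    have hBdf : ∀ t ∈ Set.Icc a b, calB g Y t *ᵥ df t = -(calC g Y t *ᵥ f t) - φ t := by
      intro t ht
      show calB g Y t *ᵥ (-(((calB g Y t)⁻¹ * calC g Y t) *ᵥ f t) - (calB g Y t)⁻¹ *ᵥ φ t) = _
      rw [Matrix.mulVec_sub, Matrix.mulVec_neg, Matrix.mulVec_mulVec, Matrix.mulVec_mulVec,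
        ← Matrix.mul_assoc, Matrix.mul_nonsing_inv _ (hBu t ht), Matrix.one_mul,
        Matrix.one_mulVec]
    have hkey1 : ∀ t ∈ Set.Icc a b, ∀ i, g (der a b v t) (Y i t) = -(φ t i) := by
      intro t ht i
      rw [hderv t ht, MKRS.alg1 g hgsym Y t (df t) (f t) i, hBdf t ht]
      simp only [Pi.sub_apply, Pi.neg_apply]
      ring
    have hkey2 : ∀ t ∈ Set.Icc a b, ∀ i,
        g (der a b v t) (deriv (Y i) t) + g (R t (v t)) (Y i t) = -(ψ t i) := by
      intro t ht i
      rw [hderv t ht, hf t ht, MKRS.alg2 g hgsym R t (hRsym t ht) Y (df t) (f t) i]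
      have hCtd : (calC g Y t)ᵀ *ᵥ df t
          = -(((calC g Y t)ᵀ * ((calB g Y t)⁻¹ * calC g Y t)) *ᵥ f t)
            - ((calC g Y t)ᵀ * (calB g Y t)⁻¹) *ᵥ φ t := by
        show (calC g Y t)ᵀ *ᵥ (-(((calB g Y t)⁻¹ * calC g Y t) *ᵥ f t)
            - (calB g Y t)⁻¹ *ᵥ φ t) = _
        rw [Matrix.mulVec_sub, Matrix.mulVec_neg, Matrix.mulVec_mulVec, Matrix.mulVec_mulVec]
      rw [hCtd]
      show _ = -((((calC g Y t)ᵀ * (calB g Y t)⁻¹ * calC g Y t - calI g R Y t) *ᵥ f t) i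
        + (((calC g Y t)ᵀ * (calB g Y t)⁻¹) *ᵥ φ t) i)
      simp only [Matrix.sub_mulVec, Pi.sub_apply, Pi.neg_apply, Pi.add_apply,
        Matrix.mul_assoc]
      ring
    refine ⟨⟨hvH1, by rw [hva]; exact P.zero_mem, hvb⟩, ?_⟩
    intro i
    set cl : ℝ → ℝ := fun t => max a (min b t) with hcl
    have hclIcc : ∀ t ∈ Set.Icc a b, cl t = t := by
      intro t ht
      show max a (min b t) = t
      rw [min_eq_right ht.2, max_eq_right ht.1]
    set wi : ℝ → ℝ := fun t => -(φ (cl t) i) with hwi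
    have hwd : ∀ t ∈ Set.Icc a b, HasDerivWithinAt wi (-(ψ t i)) (Set.Icc a b) t := by
      intro t ht
      have h1 : HasDerivWithinAt (fun r => φ r i) (ψ t i) (Set.Icc a b) t :=
        hasDerivWithinAt_pi.1 (hφd t ht) i
      exact h1.neg.congr (fun y hy => by show -(φ (cl y) i) = -(φ y i); rw [hclIcc y hy])
        (by show -(φ (cl t) i) = -(φ t i); rw [hclIcc t ht])
    have hwC : ContinuousOn wi (Set.Icc a b) := fun t ht => (hwd t ht).continuousWithinAt
    have hderw : ∀ t ∈ Set.Icc a b, der a b wi t = -(ψ t i) := by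
      intro t ht
      simp only [der, Set.indicator_of_mem ht]
      exact (hwd t ht).derivWithin (hUD t ht)
    have hψC : ∀ j, ContinuousOn (fun t => ψ t j) (Set.Icc a b) := by
      intro j
      have e1 := MKRS.contOn_matmul hCTC hBinvC
      have e2 := MKRS.contOn_matmul e1 hCC
      have esub : ∀ i' j', ContinuousOn
          (fun t => ((calC g Y t)ᵀ * (calB g Y t)⁻¹ * calC g Y t - calI g R Y t) i' j')
          (Set.Icc a b) := by
        intro i' j'
        simp only [Matrix.sub_apply]
        exact (e2 i' j').sub (hIC i' j')
      show ContinuousOn (fun t =>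
        (((calC g Y t)ᵀ * (calB g Y t)⁻¹ * calC g Y t - calI g R Y t) *ᵥ f t) j
          + (((calC g Y t)ᵀ * (calB g Y t)⁻¹) *ᵥ φ t) j) (Set.Icc a b)
      exact (MKRS.contOn_mulVec esub hfCi j).add (MKRS.contOn_mulVec e1 hφCi j)
    have hwiH1 : IsH1 a b wi := by
      refine ⟨?_, ?_, ?_, ?_⟩
      · have haew : der a b wi =ᵐ[volume.restrict (Set.Icc a b)] fun t => -(ψ t i) := by
          filter_upwards [ae_restrict_mem measurableSet_Icc] with t ht
          exact hderw t ht
        rw [memLp_congr_ae haew]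
        obtain ⟨Cb, hCb⟩ := isCompact_Icc.exists_bound_of_continuousOn (hψC i).neg
        refine MemLp.of_bound (((hψC i).neg).aestronglyMeasurable measurableSet_Icc) Cb ?_
        filter_upwards [ae_restrict_mem measurableSet_Icc] with t ht
        exact hCb t ht
      · intro t ht
        have hcont : ContinuousOn wi (Set.Icc a t) :=
          hwC.mono (Set.Icc_subset_Icc le_rfl ht.2)
        have hder' : ∀ x ∈ Set.Ioo a t, HasDerivWithinAt wi (der a b wi x) (Set.Ioi x) x := by
          intro x hx
          have hx' : x ∈ Set.Icc a b := ⟨hx.1.le, (hx.2.trans_le ht.2).le⟩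
          have hnb : Set.Icc a b ∈ 𝓝 x := Icc_mem_nhds hx.1 (hx.2.trans_le ht.2)
          rw [hderw x hx']
          exact ((hwd x hx').hasDerivAt hnb).hasDerivWithinAt
        have hint : IntervalIntegrable (der a b wi) volume a t := by
          rw [intervalIntegrable_iff_integrableOn_Ioc_of_le ht.1]
          have hbase : IntegrableOn (fun r => -(ψ r i)) (Set.Ioc a t) volume := by
            apply ContinuousOn.integrableOn_Icc ((hψC i).neg.mono
              (Set.Icc_subset_Icc le_rfl ht.2)) |>.mono_set Set.Ioc_subset_Icc_self
          refine hbase.congr_fun (fun s hs => ?_) measurableSet_Ioc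
          exact (hderw s ⟨hs.1.le, hs.2.trans ht.2⟩).symm
        have := intervalIntegral.integral_eq_sub_of_hasDeriv_right_of_le ht.1 hcont hder' hint
        rw [this]; ring
      · intro t hta
        show -(φ (cl t) i) = -(φ (cl a) i)
        have h1 : cl t = a := by
          show max a (min b t) = a
          rw [min_eq_right (hta.trans hab.le), max_eq_left hta]
        have h2 : cl a = a := hclIcc a (Set.left_mem_Icc.2 hab.le)
        rw [h1, h2]
      · intro t htb
        show -(φ (cl t) i) = -(φ (cl b) i)
        have h1 : cl t = b := by
          show max a (min b t) = b
          rw [min_eq_left htb, max_eq_right hab.le]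
        have h2 : cl b = b := hclIcc b (Set.right_mem_Icc.2 hab.le)
        rw [h1, h2]
    refine ⟨wi, hwiH1, ?_, ?_⟩
    · filter_upwards [ae_restrict_mem measurableSet_Icc] with t ht
      show -(φ (cl t) i) = g (der a b v t) (Y i t)
      rw [hclIcc t ht, ← hkey1 t ht i]
    · filter_upwards [ae_restrict_mem measurableSet_Icc] with t ht
      rw [hderw t ht]
      exact (hkey2 t ht i).symm


end
end

section
/- Let I ⊆ ℝ be an interval, ℋ and ℋ̃ real Hilbert spaces, and F : I → L(ℋ,ℋ̃) a map of class C^1 (into the Banach space of bounded linear operators) such that each F(t) is surjective. Then the family D_t = Ker(F(t)) is a C^1 family of closed subspaces of ℋ. -/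
open Set
open scoped RealInnerProductSpace Topology

noncomputable section

/-- `{D t}_{t ∈ I}` is a `C¹` family of closed subspaces of the Hilbert space `H`:
around each `t₀ ∈ I` there is a `C¹` curve `α` of isomorphisms of `H` carrying `D t`
onto a fixed closed subspace `D̄`. -/
def IsC1Family {H : Type*} [NormedAddCommGroup H] [InnerProductSpace ℝ H]
    (I : Set ℝ) (D : ℝ → Submodule ℝ H) : Prop :=
  ∀ t₀ ∈ I, ∃ ε > (0 : ℝ), ∃ α : ℝ → H →L[ℝ] H, ∃ Dbar : Submodule ℝ H,
    IsClosed (Dbar : Set H) ∧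
    ContDiffOn ℝ 1 α (Set.Ioo (t₀ - ε) (t₀ + ε) ∩ I) ∧
    ∀ t ∈ Set.Ioo (t₀ - ε) (t₀ + ε) ∩ I,
      Function.Bijective (α t) ∧ (D t).map (α t : H →ₗ[ℝ] H) = Dbar

/-- The kernel of the restriction of the bilinear form `B` to the subspace `D`. -/
def kerRestrict {H : Type*} [NormedAddCommGroup H] [InnerProductSpace ℝ H]
    (B : H → H → ℝ) (D : Submodule ℝ H) : Set H :=
  {v | v ∈ D ∧ ∀ w ∈ D, B v w = 0}

/-- The bilinear form `b` on the (subspace of a) Hilbert space `E` is represented by a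
self-adjoint bounded operator which is a compact perturbation of a positive isomorphism:
`b(x,y) = ⟪(L + K)x, y⟫` with `L` a self-adjoint positive isomorphism and `K` compact
self-adjoint. -/
def RepByCompactPerturbPosIso {E : Type*} [NormedAddCommGroup E]
    [InnerProductSpace ℝ E] (b : E → E → ℝ) : Prop :=
  ∃ L K : E →L[ℝ] E,
    (∀ x y : E, b x y = ⟪(L + K) x, y⟫) ∧
    (∀ x y : E, ⟪L x, y⟫ = ⟪x, L y⟫) ∧ Function.Bijective L ∧
    (∀ x : E, x ≠ 0 → 0 < ⟪L x, x⟫) ∧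
    IsCompactOperator K ∧ (∀ x y : E, ⟪K x, y⟫ = ⟪x, K y⟫)


/-- If `F : I → L(ℋ, ℋ̃)` is a `C¹` map with each `F(t)` surjective, then the family
`D_t = Ker(F(t))` is a `C¹` family of closed subspaces of `ℋ`. -/
theorem c1_family_of_kernels
    {H H' : Type*}
    [NormedAddCommGroup H] [InnerProductSpace ℝ H] [CompleteSpace H]
    [NormedAddCommGroup H'] [InnerProductSpace ℝ H'] [CompleteSpace H']
    (I : Set ℝ) (hI : I.OrdConnected)
    (F : ℝ → H →L[ℝ] H')
    (hF : ContDiffOn ℝ 1 F I)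
    (hsurj : ∀ t ∈ I, Function.Surjective (F t)) :
    IsC1Family I (fun t => LinearMap.ker (F t : H →ₗ[ℝ] H')) := by
  intro t₀ ht₀
  set f : H →L[ℝ] H' := F t₀ with hfdef
  haveI : CompleteSpace (LinearMap.ker (f : H →ₗ[ℝ] H')) := (ContinuousLinearMap.isClosed_ker f).completeSpace_coe
  set D₀ : Submodule ℝ H := LinearMap.ker (f : H →ₗ[ℝ] H') with hD₀
  set V : Submodule ℝ H := D₀ᗮ with hV
  haveI : CompleteSpace V := (Submodule.isClosed_orthogonal D₀).completeSpace_coe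
  -- the projection onto D₀
  set P : H →L[ℝ] H := D₀.subtypeL.comp (D₀.orthogonalProjectionOnto) with hP
  have hPmem : ∀ x : H, P x ∈ D₀ := fun x => (D₀.orthogonalProjectionOnto x).2
  have hQmem : ∀ x : H, x - P x ∈ V := fun x =>
    Submodule.sub_starProjection_mem_orthogonal (K := D₀) x
  have hfP : ∀ x : H, f (P x) = 0 := fun x => hPmem x
  -- the restriction of f to V is a continuous linear equivalence onto H'
  set g : V →L[ℝ] H' := f.comp V.subtypeL with hg
  have hginj : g.ker = ⊥ := by
    rw [Submodule.eq_bot_iff]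
    rintro x hx
    have hx1 : (x : H) ∈ D₀ := hx
    have hx0 : (x : H) = 0 :=
      (Submodule.disjoint_def.mp D₀.orthogonal_disjoint) _ hx1 x.2
    exact Subtype.ext hx0
  have hgsurj : g.range = ⊤ := by
    rw [LinearMap.range_eq_top]
    intro y
    obtain ⟨x, hx⟩ := hsurj t₀ ht₀ y
    refine ⟨⟨x - P x, hQmem x⟩, ?_⟩
    have : g ⟨x - P x, hQmem x⟩ = f (x - P x) := rfl
    rw [ContinuousLinearMap.coe_coe, this, map_sub, hfP, sub_zero, hx]
  set e : V ≃L[ℝ] H' := ContinuousLinearEquiv.ofBijective g hginj hgsurj with he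
  have he_apply : ∀ v : V, e v = f (v : H) := fun v => rfl
  set J : H' →L[ℝ] H := V.subtypeL.comp (e.symm : H' →L[ℝ] V) with hJ
  have hJmem : ∀ z : H', J z ∈ V := fun z => (e.symm z).2
  have hJinj : ∀ z : H', J z = 0 → z = 0 := by
    intro z hz
    have h1 : (e.symm z : H) = 0 := hz
    have h2 : e.symm z = 0 := Subtype.ext h1
    have := congrArg e h2
    rwa [e.apply_symm_apply, map_zero] at this
  have hJf : ∀ x : H, J (f x) = x - P x := by
    intro x
    have h1 : e ⟨x - P x, hQmem x⟩ = f x := by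
      rw [he_apply]
      show f (x - P x) = f x
      rw [map_sub, hfP, sub_zero]
    have h2 : e.symm (f x) = ⟨x - P x, hQmem x⟩ := by
      rw [← h1, e.symm_apply_apply]
    show (V.subtypeL (e.symm (f x)) : H) = x - P x
    rw [h2]; rfl
  -- the curve α
  set α : ℝ → H →L[ℝ] H := fun t => P + (ContinuousLinearMap.compL ℝ H H' H J) (F t)
    with hα
  have hα_apply : ∀ t x, α t x = P x + J (F t x) := fun t x => rfl
  have hα₀ : α t₀ = 1 := by
    ext x
    have : α t₀ x = P x + J (f x) := rfl
    rw [this, hJf, add_sub_cancel]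
    rfl
  have hαC1 : ContDiffOn ℝ 1 α I := by
    exact contDiffOn_const.add
      (((ContinuousLinearMap.compL ℝ H H' H J).contDiff).comp_contDiffOn hF)
  -- choose ε by continuity
  have hcont : ContinuousWithinAt α I t₀ := (hαC1.continuousOn) t₀ ht₀
  obtain ⟨δ, hδ, hball⟩ := Metric.continuousWithinAt_iff.mp hcont 1 one_pos
  refine ⟨δ, hδ, α, D₀, ContinuousLinearMap.isClosed_ker f, hαC1.mono (Set.inter_subset_right), ?_⟩
  rintro t ⟨htIoo, htI⟩
  have hdist : dist (α t) (α t₀) < 1 := by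
    apply hball htI
    rw [Real.dist_eq, abs_lt]
    constructor <;> [linarith [htIoo.1]; linarith [htIoo.2]]
  have hnorm : ‖(1 : H →L[ℝ] H) - α t‖ < 1 := by
    rw [← hα₀]
    rw [dist_eq_norm, ← norm_neg] at hdist
    simpa using hdist
  -- α t is a unit, hence bijective
  set u : (H →L[ℝ] H)ˣ := Units.oneSub ((1 : H →L[ℝ] H) - α t) hnorm with hu
  have huval : (u : H →L[ℝ] H) = α t := by
    show 1 - ((1 : H →L[ℝ] H) - α t) = α t
    rw [sub_sub_cancel]
  have hbij : Function.Bijective (α t) := by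
    have := (ContinuousLinearEquiv.unitsEquiv ℝ H u).bijective
    have heq : ⇑(ContinuousLinearEquiv.unitsEquiv ℝ H u) = ⇑(α t) := by
      ext x
      rw [ContinuousLinearEquiv.unitsEquiv_apply, huval]
    rwa [heq] at this
  refine ⟨hbij, ?_⟩
  -- the map equality
  apply le_antisymm
  · rintro y hy
    obtain ⟨x, hx, rfl⟩ := Submodule.mem_map.mp hy
    have hx0 : F t x = 0 := hx
    rw [ContinuousLinearMap.coe_coe, hα_apply, hx0, map_zero, add_zero]
    exact hPmem x
  · intro y hy
    obtain ⟨x, hx⟩ := hbij.2 y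
    refine Submodule.mem_map.mpr ⟨x, ?_, hx⟩
    have hmem : J (F t x) ∈ D₀ := by
      have : J (F t x) = y - P x := by rw [← hx, hα_apply]; abel
      rw [this]
      exact D₀.sub_mem hy (hPmem x)
    have hzero : J (F t x) = 0 :=
      (Submodule.disjoint_def.mp D₀.orthogonal_disjoint) _ hmem (hJmem _)
    exact hJinj _ hzero

end
end

section
/- For a Morse–Sturm system on [a,b] with initial data (P,S), if the index n_-(g) of the nondegenerate symmetric bilinear form g is strictly positive, then the index form I has infinite index on ℋ, i.e., n_-(I|_ℋ) = ∞; indeed already the restriction of I to H^1_0([a,b];ℝ^n) ⊆ ℋ has infinite index. -/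
open MeasureTheory Set Filter Matrix
open scoped RealInnerProductSpace Topology

noncomputable section

namespace MSaux

def clampf (c d t : ℝ) : ℝ := max c (min d t)

def bump (c d t : ℝ) : ℝ := ((clampf c d t - c) * (d - clampf c d t))^2

def bump' (c d t : ℝ) : ℝ :=
  2 * (clampf c d t - c) * (d - clampf c d t) * (c + d - 2 * clampf c d t)

variable {c d t : ℝ}

lemma not_mem_Ioo_left (h : t ≤ c) : t ∉ Ioo c d := fun hh => absurd hh.1 (not_lt.2 h)
lemma not_mem_Ioo_right (h : d ≤ t) : t ∉ Ioo c d := fun hh => absurd hh.2 (not_lt.2 h)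

lemma continuous_clampf : Continuous (clampf c d) := by
  unfold clampf; fun_prop

lemma continuous_bump : Continuous (bump c d) := by
  unfold bump clampf; fun_prop

lemma continuous_bump' : Continuous (bump' c d) := by
  unfold bump' clampf; fun_prop

lemma clampf_mem (hcd : c ≤ d) : clampf c d t ∈ Icc c d :=
  ⟨le_max_left _ _, max_le hcd (min_le_left _ _)⟩

lemma clampf_of_mem (hc : c ≤ t) (hd : t ≤ d) : clampf c d t = t := by
  unfold clampf; rw [min_eq_right hd, max_eq_right hc]

lemma clampf_of_le (hcd : c ≤ d) (h : t ≤ c) : clampf c d t = c := by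
  unfold clampf; rw [min_eq_right (h.trans hcd), max_eq_left h]

lemma clampf_of_ge (hcd : c ≤ d) (h : d ≤ t) : clampf c d t = d := by
  unfold clampf; rw [min_eq_left h, max_eq_right hcd]

lemma bump_nonneg : 0 ≤ bump c d t := sq_nonneg _

lemma bump_eq_zero (hcd : c ≤ d) (h : t ∉ Ioo c d) : bump c d t = 0 := by
  unfold bump
  rcases le_or_gt t c with h1 | h1
  · rw [clampf_of_le hcd h1]; ring
  · have h2 : d ≤ t := by
      by_contra h2; push_neg at h2; exact h ⟨h1, h2⟩
    rw [clampf_of_ge hcd h2]; ring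

lemma bump'_eq_zero (hcd : c ≤ d) (h : t ∉ Ioo c d) : bump' c d t = 0 := by
  unfold bump'
  rcases le_or_gt t c with h1 | h1
  · rw [clampf_of_le hcd h1]; ring
  · have h2 : d ≤ t := by
      by_contra h2; push_neg at h2; exact h ⟨h1, h2⟩
    rw [clampf_of_ge hcd h2]; ring

lemma bump_le (hcd : c ≤ d) : bump c d t ≤ (d - c)^4 / 16 := by
  obtain ⟨h1, h2⟩ := clampf_mem (t := t) hcd
  unfold bump
  set s := clampf c d t
  have hu : (0:ℝ) ≤ s - c := by linarith
  have hv : (0:ℝ) ≤ d - s := by linarith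
  have huv : (s - c) * (d - s) ≤ (d - c)^2 / 4 := by nlinarith [sq_nonneg ((s - c) - (d - s))]
  have := pow_le_pow_left₀ (mul_nonneg hu hv) huv 2
  calc ((s - c) * (d - s))^2 ≤ ((d - c)^2/4)^2 := this
    _ = (d - c)^4 / 16 := by ring

lemma bump_le_sq_left (hcd : c ≤ d) : bump c d t ≤ (d - c)^2 * (t - c)^2 := by
  rcases le_or_gt t c with h1 | h1
  · rw [bump_eq_zero hcd (not_mem_Ioo_left h1)]; positivity
  · obtain ⟨hs1, hs2⟩ := clampf_mem (t := t) hcd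
    have hst : clampf c d t ≤ t := max_le h1.le (min_le_right _ _)
    unfold bump
    set s := clampf c d t
    have e1 : (s - c)^2 ≤ (t - c)^2 := by nlinarith
    have e2 : (d - s)^2 ≤ (d - c)^2 := by nlinarith
    nlinarith [mul_le_mul e1 e2 (sq_nonneg _) (sq_nonneg _)]

lemma bump_le_sq_right (hcd : c ≤ d) : bump c d t ≤ (d - c)^2 * (t - d)^2 := by
  rcases le_or_gt d t with h1 | h1
  · rw [bump_eq_zero hcd (not_mem_Ioo_right h1)]; positivity
  · obtain ⟨hs1, hs2⟩ := clampf_mem (t := t) hcd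
    have hst : t ≤ clampf c d t := le_max_of_le_right (le_min h1.le le_rfl)
    unfold bump
    set s := clampf c d t
    have e1 : (s - c)^2 ≤ (d - c)^2 := by nlinarith
    have e2 : (d - s)^2 ≤ (t - d)^2 := by nlinarith
    nlinarith [mul_le_mul e1 e2 (sq_nonneg _) (sq_nonneg _)]

lemma hasDerivAt_zero_of_sq_bound {f : ℝ → ℝ} {t C : ℝ}
    (h : ∀ s, |f s| ≤ C * (s - t)^2) : HasDerivAt f 0 t := by
  have hft : f t = 0 := by
    have h0 : |f t| ≤ 0 := by simpa using h t
    exact abs_nonpos_iff.1 h0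
  rw [hasDerivAt_iff_isLittleO]
  simp only [hft, smul_zero, sub_zero]
  have h1 : (fun s => f s) =O[nhds t] (fun s => (s - t)^2) :=
    Asymptotics.IsBigO.of_bound C (Filter.Eventually.of_forall (fun s => by
      simpa [Real.norm_eq_abs, abs_of_nonneg (sq_nonneg (s - t))] using h s))
  refine h1.trans_isLittleO ?_
  rw [Asymptotics.isLittleO_iff]
  intro ε hε
  filter_upwards [Metric.ball_mem_nhds t hε] with s hs
  rw [Metric.mem_ball, Real.dist_eq] at hs
  have he : ‖(s - t)^2‖ = |s - t| * |s - t| := by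
    rw [Real.norm_eq_abs, sq, abs_mul]
  rw [he, Real.norm_eq_abs]
  nlinarith [abs_nonneg (s - t)]

lemma hasDerivAt_bump (hcd : c < d) (t : ℝ) :
    HasDerivAt (bump c d) (bump' c d t) t := by
  rcases lt_trichotomy t c with h | rfl | h
  · rw [bump'_eq_zero hcd.le (not_mem_Ioo_left h.le)]
    refine (hasDerivAt_const t (0:ℝ)).congr_of_eventuallyEq ?_
    filter_upwards [Iio_mem_nhds h] with s hs
    exact bump_eq_zero hcd.le (not_mem_Ioo_left (le_of_lt hs))
  · rw [bump'_eq_zero hcd.le (not_mem_Ioo_left le_rfl)]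
    exact hasDerivAt_zero_of_sq_bound (C := (d - t)^2) (fun s => by
      rw [abs_of_nonneg bump_nonneg]; exact bump_le_sq_left hcd.le)
  · rcases lt_trichotomy t d with h2 | rfl | h2
    · -- interior
      have hder : HasDerivAt (fun s => ((s - c) * (d - s))^2)
          (2 * ((t - c) * (d - t))^1 * (1 * (d - t) + (t - c) * (-1))) t := by
        have h1 : HasDerivAt (fun s : ℝ => s - c) 1 t := (hasDerivAt_id t).sub_const c
        have h2' : HasDerivAt (fun s : ℝ => d - s) (-1) t := by
          simpa using (hasDerivAt_id t).const_sub d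
        exact (h1.mul h2').pow 2
      have heq : bump' c d t = 2 * ((t - c) * (d - t))^1 * (1 * (d - t) + (t - c) * (-1)) := by
        unfold bump'
        rw [clampf_of_mem h.le h2.le]; ring
      rw [heq]
      refine hder.congr_of_eventuallyEq ?_
      filter_upwards [Ioo_mem_nhds h h2] with s hs
      unfold bump
      rw [clampf_of_mem hs.1.le hs.2.le]
    · rw [bump'_eq_zero hcd.le (not_mem_Ioo_right le_rfl)]
      exact hasDerivAt_zero_of_sq_bound (C := (t - c)^2) (fun s => by
        rw [abs_of_nonneg bump_nonneg]
        have := bump_le_sq_right (t := s) hcd.le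
        linarith [this])
    · rw [bump'_eq_zero hcd.le (not_mem_Ioo_right h2.le)]
      refine (hasDerivAt_const t (0:ℝ)).congr_of_eventuallyEq ?_
      filter_upwards [Ioi_mem_nhds h2] with s hs
      exact bump_eq_zero hcd.le (not_mem_Ioo_right (le_of_lt hs))

end MSaux

namespace MSaux

variable {a b : ℝ}

lemma bump_midpoint (hcd : c ≤ d) : bump c d ((c + d)/2) = (d - c)^4/16 := by
  unfold bump
  rw [clampf_of_mem (by linarith) (by linarith)]
  ring

lemma integral_bump'_sq_lower (hcd : c < d) (hac : a ≤ c) (hdb : d ≤ b) :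
    3 * (d - c)^7 / 1024 ≤ ∫ t in a..b, (bump' c d t)^2 := by
  set δ := d - c with hδ
  have hδ0 : 0 < δ := by simp [hδ]; linarith
  have step1 : ∫ t in c..(c + δ/4), (bump' c d t)^2 ≤ ∫ t in a..b, (bump' c d t)^2 := by
    apply intervalIntegral.integral_mono_interval hac (by linarith) (by linarith)
    · exact Filter.Eventually.of_forall (fun t => sq_nonneg _)
    · exact (continuous_bump'.pow 2).intervalIntegrable a b
  have step2 : ∫ t in c..(c + δ/4), (9/16 * δ^4) * (t - c)^2
      ≤ ∫ t in c..(c + δ/4), (bump' c d t)^2 := by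
    apply intervalIntegral.integral_mono_on (by linarith)
    · exact (Continuous.intervalIntegrable (by fun_prop) _ _)
    · exact (continuous_bump'.pow 2).intervalIntegrable _ _
    · intro t ht
      obtain ⟨ht1, ht2⟩ := ht
      have htd : t ≤ d := by simp [hδ] at ht2 ⊢; linarith
      have hb' : bump' c d t = 2 * (t - c) * (d - t) * (c + d - 2*t) := by
        unfold bump'; rw [clampf_of_mem ht1 htd]
      have hge : 3/4 * δ^2 * (t - c) ≤ bump' c d t := by
        rw [hb']
        have e1 : 3/4 * δ ≤ d - t := by simp [hδ] at ht2 ⊢; linarith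
        have e2 : δ/2 ≤ c + d - 2*t := by simp [hδ] at ht2 ⊢; linarith
        have e3 : 0 ≤ t - c := by linarith
        have e0 : (0:ℝ) ≤ d - t := by linarith
        have p1 : (3/4*δ) * (δ/2) ≤ (d - t) * (c + d - 2*t) :=
          mul_le_mul e1 e2 (by linarith) e0
        nlinarith [mul_le_mul_of_nonneg_left p1 (by linarith : (0:ℝ) ≤ 2*(t - c))]
      have hnn : 0 ≤ 3/4 * δ^2 * (t - c) :=
        mul_nonneg (by positivity) (by linarith)
      calc 9/16 * δ^4 * (t - c)^2 = (3/4 * δ^2 * (t - c))^2 := by ring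
        _ ≤ (bump' c d t)^2 := pow_le_pow_left₀ hnn hge 2
  have step3 : ∫ t in c..(c + δ/4), (9/16 * δ^4) * (t - c)^2 = 3 * δ^7 / 1024 := by
    rw [intervalIntegral.integral_const_mul]
    have : ∫ t in c..(c + δ/4), (t - c)^2 = ∫ t in (c - c)..(c + δ/4 - c), t^2 :=
      intervalIntegral.integral_comp_sub_right (fun u => u^2) c
    rw [this]
    have h0 : c - c = 0 := by ring
    have h1 : c + δ/4 - c = δ/4 := by ring
    rw [h0, h1, integral_pow]
    ring
  calc 3 * (d-c)^7/1024 = 3 * δ^7/1024 := by rw [hδ]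
    _ = ∫ t in c..(c + δ/4), (9/16 * δ^4) * (t - c)^2 := step3.symm
    _ ≤ ∫ t in c..(c + δ/4), (bump' c d t)^2 := step2
    _ ≤ ∫ t in a..b, (bump' c d t)^2 := step1

lemma integral_bump_sq_upper (hcd : c ≤ d) (hab : a ≤ b) :
    ∫ t in a..b, (bump c d t)^2 ≤ (b - a) * ((d - c)^8 / 256) := by
  have step : ∫ t in a..b, (bump c d t)^2 ≤ ∫ _t in a..b, ((d-c)^8/256 : ℝ) := by
    apply intervalIntegral.integral_mono_on hab
    · exact (continuous_bump.pow 2).intervalIntegrable _ _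
    · exact intervalIntegrable_const
    · intro t _
      calc (bump c d t)^2 ≤ ((d-c)^4/16)^2 := pow_le_pow_left₀ bump_nonneg (bump_le hcd) 2
        _ = (d-c)^8/256 := by ring
  calc ∫ t in a..b, (bump c d t)^2 ≤ ∫ _t in a..b, ((d-c)^8/256 : ℝ) := step
    _ = (b - a) * ((d-c)^8/256) := by rw [intervalIntegral.integral_const]; simp [smul_eq_mul]

end MSaux

namespace MSaux

lemma isH1_of_global {a b : ℝ} (hab : a < b) {E : Type*} [NormedAddCommGroup E] [NormedSpace ℝ E] [CompleteSpace E]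
    {v v' : ℝ → E} (hv : ∀ t, HasDerivAt v (v' t) t) (hc : Continuous v')
    (hca : ∀ t, t ≤ a → v t = v a) (hcb : ∀ t, b ≤ t → v t = v b) :
    IsH1 a b v ∧ der a b v = (Set.Icc a b).indicator v' := by
  have hder : der a b v = (Set.Icc a b).indicator v' := by
    funext t
    unfold der
    by_cases ht : t ∈ Icc a b
    · rw [indicator_of_mem ht, indicator_of_mem ht]
      exact ((hv t).hasDerivWithinAt).derivWithin ((uniqueDiffOn_Icc hab) t ht)
    · rw [indicator_of_notMem ht, indicator_of_notMem ht]
  refine ⟨⟨?_, ?_, hca, hcb⟩, hder⟩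
  · rw [hder]
    haveI : IsFiniteMeasure (volume.restrict (Icc a b)) :=
      ⟨by rw [Measure.restrict_apply_univ]; exact measure_Icc_lt_top⟩
    obtain ⟨C, hC⟩ := isCompact_Icc.exists_bound_of_continuousOn
      (hc.continuousOn : ContinuousOn v' (Icc a b))
    refine MemLp.of_bound
      ((hc.stronglyMeasurable.indicator measurableSet_Icc).aestronglyMeasurable) (max C 0) ?_
    rw [ae_restrict_iff' measurableSet_Icc]
    refine Filter.Eventually.of_forall (fun t ht => ?_)
    rw [indicator_of_mem ht]
    exact le_max_of_le_left (hC t ht)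
  · intro t ht
    have h1 : ∫ s in a..t, der a b v s = ∫ s in a..t, v' s := by
      rw [hder]
      apply intervalIntegral.integral_congr
      intro s hs
      rw [uIcc_of_le ht.1] at hs
      have hsm : s ∈ Icc a b := ⟨hs.1, hs.2.trans ht.2⟩
      simp only [Set.indicator_of_mem hsm]
    rw [h1, intervalIntegral.integral_eq_sub_of_hasDerivAt (fun s _ => hv s)
      (hc.intervalIntegrable a t)]
    abel

lemma sq_sum_of_pairwise {m : ℕ} (f : Fin m → ℝ) (h : ∀ j k, j ≠ k → f j * f k = 0) :
    (∑ j, f j)^2 = ∑ j, (f j)^2 := by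
  rw [sq, Finset.sum_mul_sum]
  rw [Finset.sum_congr rfl (fun j _ => Finset.sum_eq_single j
    (fun k _ hk => h j k (Ne.symm hk)) (by simp))]
  exact Finset.sum_congr rfl (fun j _ => by rw [sq])

lemma final_ineq {gxx M L δ : ℝ} (hg : gxx < 0) (hM : 0 ≤ M) (hL : 0 < L) (hδ : 0 < δ)
    (h : δ < 3 * (-gxx) / (4 * (M + 1) * L)) :
    gxx * (3 * δ ^ 7 / 1024) + M * (L * (δ ^ 8 / 256)) < 0 := by
  have h1 : M * L * δ < 3 * (-gxx) / 4 := by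
    have h2 : (M + 1) * L * δ < (M + 1) * L * (3 * (-gxx) / (4 * (M + 1) * L)) :=
      mul_lt_mul_of_pos_left h (by positivity)
    have h3 : (M + 1) * L * (3 * (-gxx) / (4 * (M + 1) * L)) = 3 * (-gxx) / 4 := by
      field_simp
    nlinarith [mul_pos hL hδ]
  nlinarith [mul_lt_mul_of_pos_right h1 (pow_pos hδ 7)]

end MSaux

set_option maxHeartbeats 1000000 in
/-- If the index of `g` is strictly positive, then the index form of a Morse–Sturm system
has infinite index on `ℋ`; indeed already its restriction to `H¹₀([a,b];ℝⁿ) ⊆ ℋ` has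
infinite index: for each `m` there are `m`-dimensional subspaces on which `I` is negative
definite. -/
theorem index_form_infinite_index
    {n : ℕ} (a b : ℝ) (hab : a < b)
    (g : Rn n →ₗ[ℝ] Rn n →ₗ[ℝ] ℝ)
    (hgsym : ∀ x y, g x y = g y x)
    (hgnd : ∀ x, (∀ y, g x y = 0) → x = 0)
    (R : ℝ → Rn n →L[ℝ] Rn n)
    (hR : ContinuousOn R (Set.Icc a b))
    (hRsym : ∀ t ∈ Set.Icc a b, ∀ x y, g (R t x) y = g x (R t y))
    (P : Submodule ℝ (Rn n))
    (hP : ∀ x ∈ P, (∀ y ∈ P, g x y = 0) → x = 0)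
    (S : Rn n →ₗ[ℝ] Rn n →ₗ[ℝ] ℝ)
    (hSsym : ∀ x y, S x y = S y x)
    -- `n₋(g) > 0`
    (hneg : ∃ x : Rn n, g x x < 0) :
    (∀ m : ℕ, ∃ W : Submodule ℝ (ℝ → Rn n),
      (W : Set (ℝ → Rn n)) ⊆ H10 a b (Rn n) ∧
      negDefOn (Iform a b g R S) W ∧ Module.rank ℝ W = m) ∧
    (∀ m : ℕ, ∃ W : Submodule ℝ (ℝ → Rn n),
      (W : Set (ℝ → Rn n)) ⊆ Hcal a b P ∧
      negDefOn (Iform a b g R S) W ∧ Module.rank ℝ W = m) := by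
  classical
  obtain ⟨x, hx⟩ := hneg
  have hx0 : x ≠ 0 := by
    rintro rfl
    simp at hx
  set gxx := g x x with hgxx
  set L := b - a with hLdef
  have hL0 : 0 < L := sub_pos.mpr hab
  set q : ℝ → ℝ := fun t => g (R t x) x with hqdef
  have hqc : ContinuousOn q (Set.Icc a b) := by
    have hgc : Continuous (fun u : Rn n => g u x) := by
      have : Continuous (g.flip x) := LinearMap.continuous_of_finiteDimensional (g.flip x)
      exact this
    have h1 : Continuous (fun A : Rn n →L[ℝ] Rn n => A x) :=
      (ContinuousLinearMap.apply ℝ (Rn n) x).continuous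
    exact (hgc.comp h1).comp_continuousOn hR
  obtain ⟨M, hM⟩ := isCompact_Icc.exists_bound_of_continuousOn hqc
  have hM0 : 0 ≤ M := le_trans (norm_nonneg _) (hM a ⟨le_rfl, hab.le⟩)
  suffices H : ∀ m : ℕ, ∃ W : Submodule ℝ (ℝ → Rn n),
      (W : Set (ℝ → Rn n)) ⊆ H10 a b (Rn n) ∧
      negDefOn (Iform a b g R S) W ∧ Module.rank ℝ W = m by
    refine ⟨H, fun m => ?_⟩
    obtain ⟨W, h1, h2, h3⟩ := H m
    refine ⟨W, fun v hv => ?_, h2, h3⟩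
    obtain ⟨hH1, hva, hvb⟩ := h1 hv
    exact ⟨hH1, by rw [hva]; exact P.zero_mem, hvb⟩
  intro m
  -- choice of the number of subintervals
  set ε : ℝ := 3 * (-gxx) / (4 * (M + 1) * L) with hεdef
  have hε0 : 0 < ε := div_pos (by linarith) (by positivity)
  obtain ⟨K, hK⟩ := exists_nat_gt (max (m : ℝ) (L / ε))
  have hKm : (m : ℝ) ≤ K := le_of_lt (lt_of_le_of_lt (le_max_left _ _) hK)
  have hKL : L / ε < K := lt_of_le_of_lt (le_max_right _ _) hK
  have hK0 : (0 : ℝ) < K := (div_pos hL0 hε0).trans hKL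
  set δ : ℝ := L / K with hδdef
  have hδ0 : 0 < δ := div_pos hL0 hK0
  have hδε : δ < ε := by
    rw [hδdef, div_lt_iff₀ hK0]
    calc L = (L / ε) * ε := by field_simp
      _ < (K : ℝ) * ε := mul_lt_mul_of_pos_right hKL hε0
      _ = ε * K := mul_comm _ _
  have hKδ : (K : ℝ) * δ = L := by
    rw [hδdef]; field_simp
  -- the subintervals
  set cj : Fin m → ℝ := fun j => a + j * δ with hcjdef
  set dj : Fin m → ℝ := fun j => a + ((j : ℝ) + 1) * δ with hdjdef
  have hcd : ∀ j, cj j < dj j := by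
    intro j; simp only [hcjdef, hdjdef]
    have : (j : ℝ) * δ < ((j : ℝ) + 1) * δ := by nlinarith
    linarith
  have hdelta : ∀ j, dj j - cj j = δ := by
    intro j; simp only [hcjdef, hdjdef]; ring
  have hacj : ∀ j, a ≤ cj j := by
    intro j; simp only [hcjdef]
    have : (0 : ℝ) ≤ (j : ℝ) * δ := mul_nonneg (Nat.cast_nonneg _) hδ0.le
    linarith
  have hdjb : ∀ j, dj j ≤ b := by
    intro j
    have hj1 : ((j : ℝ) + 1) ≤ (m : ℝ) := by
      have := j.2
      exact_mod_cast Nat.succ_le_of_lt this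
    have h2 : ((j : ℝ) + 1) * δ ≤ (K : ℝ) * δ :=
      mul_le_mul_of_nonneg_right (hj1.trans hKm) hδ0.le
    rw [hKδ] at h2
    simp only [hdjdef]
    rw [hLdef] at h2
    linarith
  -- bumps
  set Bf : Fin m → ℝ → ℝ := fun j => MSaux.bump (cj j) (dj j) with hBf
  set Bf' : Fin m → ℝ → ℝ := fun j => MSaux.bump' (cj j) (dj j) with hBf'
  have hnot : ∀ (t : ℝ) (j k : Fin m), j ≠ k →
      t ∉ Set.Ioo (cj j) (dj j) ∨ t ∉ Set.Ioo (cj k) (dj k) := by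
    intro t j k hjk
    have key : ∀ (j k : Fin m), (j : ℕ) < (k : ℕ) →
        t ∉ Set.Ioo (cj j) (dj j) ∨ t ∉ Set.Ioo (cj k) (dj k) := by
      intro j k hlt
      have hj1k : ((j : ℝ) + 1) ≤ (k : ℝ) := by exact_mod_cast Nat.succ_le_of_lt hlt
      have hdc : dj j ≤ cj k := by
        simp only [hcjdef, hdjdef]
        nlinarith
      rcases le_or_gt t (cj k) with h | h
      · exact Or.inr (MSaux.not_mem_Ioo_left h)
      · exact Or.inl (MSaux.not_mem_Ioo_right (hdc.trans h.le))
    rcases lt_or_gt_of_ne (fun e => hjk (Fin.ext e) : (j : ℕ) ≠ (k : ℕ)) with h | h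
    · exact key j k h
    · exact (key k j h).symm
  have hBfzero : ∀ (j : Fin m) (t : ℝ), t ∉ Set.Ioo (cj j) (dj j) → Bf j t = 0 :=
    fun j t ht => MSaux.bump_eq_zero (hcd j).le ht
  have hBf'zero : ∀ (j : Fin m) (t : ℝ), t ∉ Set.Ioo (cj j) (dj j) → Bf' j t = 0 :=
    fun j t ht => MSaux.bump'_eq_zero (hcd j).le ht
  -- the linear parametrization
  set Tl : (Fin m → ℝ) →ₗ[ℝ] (ℝ → Rn n) :=
    { toFun := fun cf t => (∑ j, cf j * Bf j t) • x
      map_add' := by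
        intro c1 c2
        funext t
        simp only [Pi.add_apply, add_mul, Finset.sum_add_distrib, add_smul]
      map_smul' := by
        intro r c1
        funext t
        simp only [Pi.smul_apply, smul_eq_mul, RingHom.id_apply, mul_assoc,
          ← Finset.mul_sum, smul_smul] } with hTl
  have hTapp : ∀ (cf : Fin m → ℝ) (t : ℝ), Tl cf t = (∑ j, cf j * Bf j t) • x :=
    fun _ _ => rfl
  have hFd : ∀ (cf : Fin m → ℝ) (t : ℝ),
      HasDerivAt (fun s => ∑ j, cf j * Bf j s) (∑ j, cf j * Bf' j t) t := by
    intro cf t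
    exact HasDerivAt.fun_sum (fun j _ => (MSaux.hasDerivAt_bump (hcd j) t).const_mul (cf j))
  have hvd : ∀ (cf : Fin m → ℝ) (t : ℝ),
      HasDerivAt (Tl cf) ((∑ j, cf j * Bf' j t) • x) t := by
    intro cf t
    exact (hFd cf t).smul_const x
  have hBcont : ∀ j : Fin m, Continuous (Bf j) := fun j => MSaux.continuous_bump
  have hB'cont : ∀ j : Fin m, Continuous (Bf' j) := fun j => MSaux.continuous_bump'
  have hFcont : ∀ cf : Fin m → ℝ, Continuous (fun t => ∑ j, cf j * Bf j t) :=
    fun cf => continuous_finset_sum _ (fun j _ => continuous_const.mul (hBcont j))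
  have hF'cont : ∀ cf : Fin m → ℝ, Continuous (fun t => ∑ j, cf j * Bf' j t) :=
    fun cf => continuous_finset_sum _ (fun j _ => continuous_const.mul (hB'cont j))
  have hBfa : ∀ (j : Fin m) (t : ℝ), t ≤ a → Bf j t = 0 :=
    fun j t ht => hBfzero j t (MSaux.not_mem_Ioo_left (ht.trans (hacj j)))
  have hBfb : ∀ (j : Fin m) (t : ℝ), b ≤ t → Bf j t = 0 :=
    fun j t ht => hBfzero j t (MSaux.not_mem_Ioo_right ((hdjb j).trans ht))
  have hTa : ∀ (cf : Fin m → ℝ) (t : ℝ), t ≤ a → Tl cf t = 0 := by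
    intro cf t ht
    rw [hTapp, Finset.sum_eq_zero (fun j _ => by rw [hBfa j t ht, mul_zero]), zero_smul]
  have hTb : ∀ (cf : Fin m → ℝ) (t : ℝ), b ≤ t → Tl cf t = 0 := by
    intro cf t ht
    rw [hTapp, Finset.sum_eq_zero (fun j _ => by rw [hBfb j t ht, mul_zero]), zero_smul]
  have hmem : ∀ cf : Fin m → ℝ, IsH1 a b (Tl cf) ∧
      der a b (Tl cf) = (Set.Icc a b).indicator (fun t => (∑ j, cf j * Bf' j t) • x) := by
    intro cf
    refine MSaux.isH1_of_global hab (hvd cf) ((hF'cont cf).smul continuous_const) ?_ ?_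
    · intro t ht; rw [hTa cf t ht, hTa cf a le_rfl]
    · intro t ht; rw [hTb cf t ht, hTb cf b le_rfl]
  have hH10 : ∀ cf : Fin m → ℝ, Tl cf ∈ H10 a b (Rn n) :=
    fun cf => ⟨(hmem cf).1, hTa cf a le_rfl, hTb cf b le_rfl⟩
  -- injectivity
  have hinj : Function.Injective Tl := by
    rw [← LinearMap.ker_eq_bot, LinearMap.ker_eq_bot']
    intro cf hcf
    funext j
    set tm : ℝ := (cj j + dj j) / 2 with htm
    have hmid : tm ∈ Set.Ioo (cj j) (dj j) := ⟨by
      simp only [htm]; linarith [hcd j], by simp only [htm]; linarith [hcd j]⟩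
    have h0 := congrFun hcf tm
    rw [hTapp] at h0
    have hsum : (∑ k, cf k * Bf k tm) = cf j * Bf j tm := by
      apply Finset.sum_eq_single j
      · intro k _ hk
        rcases hnot tm k j hk with h | h
        · rw [hBfzero k _ h, mul_zero]
        · exact absurd hmid h
      · intro h; exact absurd (Finset.mem_univ j) h
    rw [hsum] at h0
    have hBval : Bf j tm = δ ^ 4 / 16 := by
      have h5 := MSaux.bump_midpoint (c := cj j) (d := dj j) (hcd j).le
      rw [hdelta j] at h5
      exact h5
    have h0' : (cf j * (δ ^ 4 / 16)) • x = 0 := by rw [← hBval]; exact h0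
    rcases smul_eq_zero.1 h0' with h | h
    · have hne : δ ^ 4 / 16 ≠ 0 := by positivity
      have := mul_eq_zero.1 h
      simp only [Pi.zero_apply]
      tauto
    · exact absurd h hx0
  refine ⟨LinearMap.range Tl, ?_, ?_, ?_⟩
  · intro v hv
    obtain ⟨cf, rfl⟩ := hv
    exact hH10 cf
  · -- negative definiteness
    intro v hv hvne
    obtain ⟨cf, rfl⟩ := hv
    have hcf0 : cf ≠ 0 := by
      rintro rfl
      exact hvne (map_zero Tl)
    have hj0 : ∃ j, cf j ≠ 0 := by
      by_contra hc
      push_neg at hc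
      exact hcf0 (funext (fun j => hc j))
    obtain ⟨j0, hj0⟩ := hj0
    set F : ℝ → ℝ := fun t => ∑ j, cf j * Bf j t with hF
    set F' : ℝ → ℝ := fun t => ∑ j, cf j * Bf' j t with hF'
    have hderv := (hmem cf).2
    have hva : Tl cf a = 0 := hTa cf a le_rfl
    have hIeq : Iform a b g R S (Tl cf) (Tl cf)
        = ∫ t in a..b, (gxx * (F' t) ^ 2 + q t * (F t) ^ 2) := by
      unfold Iform
      rw [hva]
      simp only [map_zero, LinearMap.zero_apply, sub_zero]
      apply intervalIntegral.integral_congr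
      intro t ht
      rw [uIcc_of_le hab.le] at ht
      rw [hderv]
      simp only [Set.indicator_of_mem ht, hTapp, _root_.map_smul, LinearMap.smul_apply,
        smul_eq_mul, ContinuousLinearMap.map_smul, hF, hF', hqdef, hgxx]
      ring
    have hcont1 : Continuous (fun t => gxx * (F' t) ^ 2) := continuous_const.mul ((hF'cont cf).pow 2)
    have hint2 : IntervalIntegrable (fun t => q t * (F t) ^ 2) volume a b := by
      apply ContinuousOn.intervalIntegrable
      rw [uIcc_of_le hab.le]
      exact hqc.mul ((hFcont cf).pow 2).continuousOn
    have hint3 : IntervalIntegrable (fun t => M * (F t) ^ 2) volume a b :=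
      (continuous_const.mul ((hFcont cf).pow 2)).intervalIntegrable a b
    have hsplit : ∫ t in a..b, (gxx * (F' t) ^ 2 + q t * (F t) ^ 2)
        = gxx * (∫ t in a..b, (F' t) ^ 2) + ∫ t in a..b, q t * (F t) ^ 2 := by
      rw [intervalIntegral.integral_add (hcont1.intervalIntegrable a b) hint2,
        intervalIntegral.integral_const_mul]
    have hF'sq : ∀ t, (F' t) ^ 2 = ∑ j, (cf j) ^ 2 * (Bf' j t) ^ 2 := by
      intro t
      have hpair : ∀ j k : Fin m, j ≠ k → (cf j * Bf' j t) * (cf k * Bf' k t) = 0 := by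
        intro j k hjk
        rcases hnot t j k hjk with h | h
        · rw [hBf'zero j t h]; ring
        · rw [hBf'zero k t h]; ring
      show (∑ j, cf j * Bf' j t) ^ 2 = _
      rw [MSaux.sq_sum_of_pairwise _ hpair]
      exact Finset.sum_congr rfl (fun j _ => by ring)
    have hFsq : ∀ t, (F t) ^ 2 = ∑ j, (cf j) ^ 2 * (Bf j t) ^ 2 := by
      intro t
      have hpair : ∀ j k : Fin m, j ≠ k → (cf j * Bf j t) * (cf k * Bf k t) = 0 := by
        intro j k hjk
        rcases hnot t j k hjk with h | h
        · rw [hBfzero j t h]; ring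
        · rw [hBfzero k t h]; ring
      show (∑ j, cf j * Bf j t) ^ 2 = _
      rw [MSaux.sq_sum_of_pairwise _ hpair]
      exact Finset.sum_congr rfl (fun j _ => by ring)
    have hIF' : ∫ t in a..b, (F' t) ^ 2 = ∑ j, (cf j) ^ 2 * ∫ t in a..b, (Bf' j t) ^ 2 := by
      rw [intervalIntegral.integral_congr (g := fun t => ∑ j, (cf j) ^ 2 * (Bf' j t) ^ 2)
        (fun t _ => hF'sq t),
        intervalIntegral.integral_finset_sum (f := fun j t => (cf j) ^ 2 * (Bf' j t) ^ 2)
          (fun j _ => (continuous_const.mul ((hB'cont j).pow 2)).intervalIntegrable a b)]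
      exact Finset.sum_congr rfl (fun j _ => intervalIntegral.integral_const_mul _ _)
    have hIF : ∫ t in a..b, (F t) ^ 2 = ∑ j, (cf j) ^ 2 * ∫ t in a..b, (Bf j t) ^ 2 := by
      rw [intervalIntegral.integral_congr (g := fun t => ∑ j, (cf j) ^ 2 * (Bf j t) ^ 2)
        (fun t _ => hFsq t),
        intervalIntegral.integral_finset_sum (f := fun j t => (cf j) ^ 2 * (Bf j t) ^ 2)
          (fun j _ => (continuous_const.mul ((hBcont j).pow 2)).intervalIntegrable a b)]
      exact Finset.sum_congr rfl (fun j _ => intervalIntegral.integral_const_mul _ _)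
    have hqbound : ∫ t in a..b, q t * (F t) ^ 2 ≤ M * ∫ t in a..b, (F t) ^ 2 := by
      rw [← intervalIntegral.integral_const_mul]
      apply intervalIntegral.integral_mono_on hab.le hint2 hint3
      intro t ht
      have hqt := hM t ht
      rw [Real.norm_eq_abs] at hqt
      exact mul_le_mul_of_nonneg_right (le_trans (le_abs_self _) hqt) (sq_nonneg _)
    have hAj : ∀ j, 3 * δ ^ 7 / 1024 ≤ ∫ t in a..b, (Bf' j t) ^ 2 := by
      intro j
      have h6 := MSaux.integral_bump'_sq_lower (hcd j) (hacj j) (hdjb j)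
      rwa [hdelta j] at h6
    have hBj : ∀ j, ∫ t in a..b, (Bf j t) ^ 2 ≤ L * (δ ^ 8 / 256) := by
      intro j
      have h7 := MSaux.integral_bump_sq_upper (hcd j).le hab.le
      rwa [hdelta j, ← hLdef] at h7
    have hsum1 : ∑ j, (cf j) ^ 2 * (3 * δ ^ 7 / 1024)
        ≤ ∑ j, (cf j) ^ 2 * ∫ t in a..b, (Bf' j t) ^ 2 :=
      Finset.sum_le_sum (fun j _ => mul_le_mul_of_nonneg_left (hAj j) (sq_nonneg _))
    have hsum2 : ∑ j, (cf j) ^ 2 * ∫ t in a..b, (Bf j t) ^ 2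
        ≤ ∑ j, (cf j) ^ 2 * (L * (δ ^ 8 / 256)) :=
      Finset.sum_le_sum (fun j _ => mul_le_mul_of_nonneg_left (hBj j) (sq_nonneg _))
    have hkin : gxx * ∫ t in a..b, (F' t) ^ 2
        ≤ gxx * ∑ j, (cf j) ^ 2 * (3 * δ ^ 7 / 1024) := by
      rw [hIF']
      exact mul_le_mul_of_nonpos_left hsum1 hx.le
    have hpot : M * ∫ t in a..b, (F t) ^ 2 ≤ ∑ j, (cf j) ^ 2 * (M * (L * (δ ^ 8 / 256))) := by
      rw [hIF]
      calc M * ∑ j, (cf j) ^ 2 * ∫ t in a..b, (Bf j t) ^ 2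
          ≤ M * ∑ j, (cf j) ^ 2 * (L * (δ ^ 8 / 256)) :=
            mul_le_mul_of_nonneg_left hsum2 hM0
        _ = ∑ j, (cf j) ^ 2 * (M * (L * (δ ^ 8 / 256))) := by
            rw [Finset.mul_sum]
            exact Finset.sum_congr rfl (fun j _ => by ring)
    have hE : gxx * (3 * δ ^ 7 / 1024) + M * (L * (δ ^ 8 / 256)) < 0 :=
      MSaux.final_ineq hx hM0 hL0 hδ0 hδε
    have hup : Iform a b g R S (Tl cf) (Tl cf)
        ≤ (∑ j, (cf j) ^ 2) * (gxx * (3 * δ ^ 7 / 1024) + M * (L * (δ ^ 8 / 256))) := by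
      rw [hIeq, hsplit]
      calc gxx * (∫ t in a..b, (F' t) ^ 2) + ∫ t in a..b, q t * (F t) ^ 2
          ≤ (gxx * ∑ j, (cf j) ^ 2 * (3 * δ ^ 7 / 1024)) + M * ∫ t in a..b, (F t) ^ 2 :=
            add_le_add hkin hqbound
        _ ≤ (gxx * ∑ j, (cf j) ^ 2 * (3 * δ ^ 7 / 1024))
              + ∑ j, (cf j) ^ 2 * (M * (L * (δ ^ 8 / 256))) := add_le_add_right hpot _
        _ = (∑ j, (cf j) ^ 2) * (gxx * (3 * δ ^ 7 / 1024) + M * (L * (δ ^ 8 / 256))) := by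
            rw [Finset.mul_sum, Finset.sum_mul, ← Finset.sum_add_distrib]
            exact Finset.sum_congr rfl (fun j _ => by ring)
    have hpos : 0 < ∑ j, (cf j) ^ 2 :=
      Finset.sum_pos' (fun j _ => sq_nonneg _)
        ⟨j0, Finset.mem_univ _, by rw [sq]; exact mul_self_pos.mpr hj0⟩
    exact lt_of_le_of_lt hup (mul_neg_of_pos_of_neg hpos hE)
  · -- rank
    rw [← (LinearEquiv.ofInjective Tl hinj).rank_eq, rank_fun']
    simp


end
end
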